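/- arXiv:1208.5718 — 8 statements merged into one kernel-verified Lean document; each statement's English description precedes it below -/
import Mathlib

section
/- Let P be a finite poset on n elements and ω : P → Fin n satisfy: (1) |{x : ω(x) ≤ i}| ≥ i+1 for all i, and (2) x > y implies ω(x) ≤ ω(y). Order permutations σ, π of P lexicographically by the first position where they differ, comparing entries in P. Let Λmax be the ω-legal permutations that are maximal in this order among ω-legal permutations (no ω-legal σ' with σ' > σ) and Λmin the minimal ones. Then |Λmin| ≤ |Λmax|. -/
/-!
Starting from `σ ∈ Λmin`, repeatedly swap the lexicographically first ascent `(j, k)` (positions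
`j < k` with `σ j < σ k`). By hypothesis (2) this keeps `σ` `ω`-legal, and it preserves the
invariant that every legal descent (a swap leading to a smaller `ω`-legal permutation) comes
lexicographically before every ascent. Ascents only move later, so the walk ends at an `ω`-legal
permutation without ascents, which lies in `Λmax`. The invariant makes each step reversible:
`(j, k)` is the lexicographically last legal descent of the result. Members of `Λmin` have no legal
descents, so no step leads into them, and walks from distinct starting points never meet; this
gives an injection `Λmin → Λmax`.
-/

open scoped Classical

/-- `σ` is `ω`-legal: the label of the entry at each position is at most the position. -/
def OmegaLegal {n : ℕ} {P : Type*} [PartialOrder P] (ω : P → Fin n) (σ : Fin n ≃ P) : Prop :=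
  ∀ i : Fin n, ω (σ i) ≤ i

/-- `σ > π` : at the first position where they differ, the entry of `σ` is greater. -/
def PermGt {n : ℕ} {P : Type*} [PartialOrder P] (σ π : Fin n ≃ P) : Prop :=
  ∃ j : Fin n, π j < σ j ∧ ∀ i : Fin n, i < j → σ i = π i

theorem Relation.ReflTransGen.eq_of_leftUnique {α : Type*} {r : α → α → Prop} {a b c : α}
    (hr : Relator.LeftUnique r) (ha : ∀ x, ¬ r x a) (hb : ∀ x, ¬ r x b)
    (hac : ReflTransGen r a c) (hbc : ReflTransGen r b c) : a = b := by
  have hr' : Relator.RightUnique (Function.swap r) := fun _ _ _ h₁ h₂ => hr h₁ h₂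
  rw [← reflTransGen_swap] at hac hbc
  rcases hac.total_of_right_unique hr' hbc with hab | hba
  · rcases (reflTransGen_swap.mp hab).cases_tail with rfl | ⟨x, -, hx⟩
    · rfl
    · exact absurd hx (ha x)
  · rcases (reflTransGen_swap.mp hba).cases_tail with rfl | ⟨x, -, hx⟩
    · rfl
    · exact absurd hx (hb x)

section SwapAt

variable {n : ℕ} {P : Type*}

def swapAt (j k : Fin n) (σ : Fin n ≃ P) : Fin n ≃ P := (Equiv.swap j k).trans σ

variable {i j k : Fin n} {σ : Fin n ≃ P}

@[simp] lemma swapAt_apply_left : swapAt j k σ j = σ k := by simp [swapAt]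

@[simp] lemma swapAt_apply_right : swapAt j k σ k = σ j := by simp [swapAt]

lemma swapAt_apply_of_ne_of_ne (hj : i ≠ j) (hk : i ≠ k) : swapAt j k σ i = σ i := by
  simp [swapAt, Equiv.swap_apply_of_ne_of_ne hj hk]

lemma swapAt_apply_of_lt (hij : i < j) (hjk : j < k) : swapAt j k σ i = σ i :=
  swapAt_apply_of_ne_of_ne hij.ne (hij.trans hjk).ne

@[simp] lemma swapAt_swapAt : swapAt j k (swapAt j k σ) = σ := by
  ext; simp [swapAt]

end SwapAt

section Legal

variable {n : ℕ} {P : Type*} [PartialOrder P] {ω : P → Fin n} {σ τ : Fin n ≃ P} {j k : Fin n}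

def IsLegalMin (ω : P → Fin n) (σ : Fin n ≃ P) : Prop :=
  OmegaLegal ω σ ∧ ¬ ∃ τ, OmegaLegal ω τ ∧ PermGt σ τ

def IsLegalMax (ω : P → Fin n) (σ : Fin n ≃ P) : Prop :=
  OmegaLegal ω σ ∧ ¬ ∃ τ, OmegaLegal ω τ ∧ PermGt τ σ

def IsAscent (σ : Fin n ≃ P) (j k : Fin n) : Prop := j < k ∧ σ j < σ k

def IsLegalDescent (ω : P → Fin n) (σ : Fin n ≃ P) (a b : Fin n) : Prop :=
  a < b ∧ σ b < σ a ∧ ω (σ b) ≤ a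

lemma OmegaLegal.swapAt (hσ : OmegaLegal ω σ) (hjk : j < k) (hk : ω (σ k) ≤ j) :
    OmegaLegal ω (swapAt j k σ) := by
  intro i
  rcases eq_or_ne i j with rfl | hij
  · simpa using hk
  rcases eq_or_ne i k with rfl | hik
  · simpa using (hσ j).trans hjk.le
  · simpa [swapAt_apply_of_ne_of_ne hij hik] using hσ i

lemma permGt_swapAt (hjk : j < k) (h : σ j < σ k) : PermGt (swapAt j k σ) σ :=
  ⟨j, by simpa using h, fun _ hi => swapAt_apply_of_lt hi hjk⟩

lemma permGt_swapAt_self (hjk : j < k) (h : σ k < σ j) : PermGt σ (swapAt j k σ) :=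
  ⟨j, by simpa using h, fun _ hi => (swapAt_apply_of_lt hi hjk).symm⟩

lemma IsLegalDescent.exists_permGt (hσ : OmegaLegal ω σ) {a b : Fin n}
    (h : IsLegalDescent ω σ a b) : ∃ τ, OmegaLegal ω τ ∧ PermGt σ τ :=
  ⟨_, hσ.swapAt h.1 h.2.2, permGt_swapAt_self h.1 h.2.1⟩

lemma PermGt.exists_isAscent (h : PermGt τ σ) : ∃ u v, IsAscent σ u v := by
  obtain ⟨j, hlt, hagree⟩ := h
  obtain ⟨b, hb⟩ := σ.surjective (τ j)
  refine ⟨j, b, ?_, hb ▸ hlt⟩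
  rcases lt_trichotomy b j with hbj | rfl | hbj
  · exact absurd (τ.injective ((hagree b hbj).trans hb)) hbj.ne
  · exact absurd hb hlt.ne
  · exact hbj

lemma isLegalMax_of_forall_not_isAscent (hσ : OmegaLegal ω σ) (h : ∀ u v, ¬ IsAscent σ u v) :
    IsLegalMax ω σ :=
  ⟨hσ, fun ⟨_, _, hgt⟩ => by obtain ⟨u, v, huv⟩ := hgt.exists_isAscent; exact h u v huv⟩

end Legal

section AscentWalk

variable {n : ℕ} {P : Type*} [PartialOrder P] {ω : P → Fin n} {σ τ : Fin n ≃ P} {j k : Fin n}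

def IsFirstAscent (σ : Fin n ≃ P) (j k : Fin n) : Prop :=
  IsAscent σ j k ∧ ∀ u v, IsAscent σ u v → toLex (j, k) ≤ toLex (u, v)

def DescentsPrecedeAscents (ω : P → Fin n) (σ : Fin n ≃ P) : Prop :=
  ∀ a b u v, IsLegalDescent ω σ a b → IsAscent σ u v → toLex (a, b) ≤ toLex (u, v)

def AscentStep (ω : P → Fin n) (σ τ : Fin n ≃ P) : Prop :=
  OmegaLegal ω σ ∧ DescentsPrecedeAscents ω σ ∧ ∃ j k, IsFirstAscent σ j k ∧ τ = swapAt j k σ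

lemma IsLegalMin.descentsPrecedeAscents (h : IsLegalMin ω σ) : DescentsPrecedeAscents ω σ :=
  fun _ _ _ _ hD _ => absurd (hD.exists_permGt h.1) h.2

noncomputable def ascents (σ : Fin n ≃ P) : Finset (Fin n × Fin n) := {p | IsAscent σ p.1 p.2}

@[simp] lemma mem_ascents {p : Fin n × Fin n} : p ∈ ascents σ ↔ IsAscent σ p.1 p.2 := by
  simp [ascents]

noncomputable def firstAscent (σ : Fin n ≃ P) : WithTop (Fin n ×ₗ Fin n) :=
  (ascents σ).inf fun p => WithTop.some (toLex p)

lemma exists_isFirstAscent {u v : Fin n} (h : IsAscent σ u v) : ∃ j k, IsFirstAscent σ j k := by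
  obtain ⟨⟨j, k⟩, hjk, hfirst⟩ := (ascents σ).exists_min_image toLex ⟨(u, v), mem_ascents.mpr h⟩
  exact ⟨j, k, mem_ascents.mp hjk, fun u v huv => hfirst (u, v) (mem_ascents.mpr huv)⟩

lemma IsAscent.omegaLegal_swapAt (hω : ∀ x y : P, y < x → ω x ≤ ω y) (hσ : OmegaLegal ω σ)
    (h : IsAscent σ j k) : OmegaLegal ω (swapAt j k σ) :=
  hσ.swapAt h.1 ((hω _ _ h.2).trans (hσ j))

lemma IsAscent.isLegalDescent_swapAt (hσ : OmegaLegal ω σ) (h : IsAscent σ j k) :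
    IsLegalDescent ω (swapAt j k σ) j k :=
  ⟨h.1, by simpa using h.2, by simpa using hσ j⟩

/-- Undoing the swap would turn such an ascent into an ascent of `σ` lexicographically before
`(j, k)`, or contradict `σ j < σ k`. -/
lemma IsFirstAscent.lt_of_isAscent_swapAt {u v : Fin n} (h : IsFirstAscent σ j k)
    (hA : IsAscent (swapAt j k σ) u v) : toLex (j, k) < toLex (u, v) := by
  obtain ⟨⟨hjk, hσjk⟩, hfirst⟩ := h
  obtain ⟨huv, hσuv⟩ := hA
  simp only [IsAscent, Prod.Lex.toLex_le_toLex] at hfirst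
  rw [Prod.Lex.toLex_lt_toLex]
  grind [swapAt_apply_left, swapAt_apply_right, swapAt_apply_of_ne_of_ne]

/-- Undoing the swap would turn such a descent into a legal descent of `σ` after its first
ascent, or make `(j, a)` an ascent of `σ` with `a < k`. -/
lemma IsFirstAscent.le_of_isLegalDescent_swapAt {a b : Fin n}
    (hσ : DescentsPrecedeAscents ω σ) (h : IsFirstAscent σ j k)
    (hD : IsLegalDescent ω (swapAt j k σ) a b) : toLex (a, b) ≤ toLex (j, k) := by
  obtain ⟨⟨hjk, hσjk⟩, hfirst⟩ := h
  obtain ⟨hab, hσab, hωb⟩ := hD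
  have hbefore := fun a b hD => hσ a b j k hD ⟨hjk, hσjk⟩
  simp only [IsLegalDescent, IsAscent, Prod.Lex.toLex_le_toLex] at hfirst hbefore ⊢
  grind [swapAt_apply_left, swapAt_apply_right, swapAt_apply_of_ne_of_ne]

lemma IsFirstAscent.descentsPrecedeAscents_swapAt (hσ : DescentsPrecedeAscents ω σ)
    (h : IsFirstAscent σ j k) : DescentsPrecedeAscents ω (swapAt j k σ) :=
  fun _ _ _ _ hD hA =>
    (h.le_of_isLegalDescent_swapAt hσ hD).trans (h.lt_of_isAscent_swapAt hA).le

lemma IsLegalMin.not_ascentStep (h : IsLegalMin ω σ) (ρ : Fin n ≃ P) : ¬ AscentStep ω ρ σ := by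
  rintro ⟨hρ, -, j, k, ⟨⟨hjk, hρjk⟩, -⟩, rfl⟩
  exact h.2 ⟨ρ, hρ, permGt_swapAt hjk hρjk⟩

lemma AscentStep.firstAscent_lt (h : AscentStep ω σ τ) : firstAscent σ < firstAscent τ := by
  obtain ⟨-, -, j, k, hfirst, rfl⟩ := h
  calc firstAscent σ ≤ toLex (j, k) := Finset.inf_le (mem_ascents.mpr hfirst.1)
    _ < firstAscent (swapAt j k σ) := by
      rw [firstAscent, Finset.lt_inf_iff (WithTop.coe_lt_top _)]
      intro ⟨u, v⟩ huv
      exact WithTop.coe_lt_coe.mpr (hfirst.lt_of_isAscent_swapAt (mem_ascents.mp huv))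

/-- The first ascent `(j, k)` of `σ` is recovered from `swapAt j k σ` as its lexicographically
last legal descent. -/
lemma ascentStep_leftUnique : Relator.LeftUnique (AscentStep ω) := by
  rintro σ₁ σ₂ τ ⟨hσ₁, hinv₁, j₁, k₁, h₁, rfl⟩ ⟨hσ₂, hinv₂, j₂, k₂, h₂, he⟩
  have hle₁ := h₂.le_of_isLegalDescent_swapAt hinv₂ (he ▸ h₁.1.isLegalDescent_swapAt hσ₁)
  have hle₂ := h₁.le_of_isLegalDescent_swapAt hinv₁ (he ▸ h₂.1.isLegalDescent_swapAt hσ₂)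
  obtain ⟨rfl, rfl⟩ := Prod.ext_iff.mp (toLex.injective (hle₁.antisymm hle₂))
  simpa using congrArg (swapAt j₁ k₁) he

lemma wellFounded_flip_ascentStep : WellFounded (flip (AscentStep ω)) :=
  Subrelation.wf (fun h => AscentStep.firstAscent_lt h)
    (InvImage.wf firstAscent (wellFounded_gt (α := WithTop (Fin n ×ₗ Fin n))))

lemma exists_reflTransGen_ascentStep (hω : ∀ x y : P, y < x → ω x ≤ ω y)
    (hσ : OmegaLegal ω σ) (hinv : DescentsPrecedeAscents ω σ) :
    ∃ π, IsLegalMax ω π ∧ Relation.ReflTransGen (AscentStep ω) σ π := by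
  induction σ using (wellFounded_flip_ascentStep (ω := ω)).induction with
  | _ σ ih =>
    by_cases hasc : ∃ u v, IsAscent σ u v
    · obtain ⟨u, v, huv⟩ := hasc
      obtain ⟨j, k, hfirst⟩ := exists_isFirstAscent huv
      have hstep : AscentStep ω σ (swapAt j k σ) := ⟨hσ, hinv, j, k, hfirst, rfl⟩
      obtain ⟨π, hπ, hreach⟩ := ih _ hstep (hfirst.1.omegaLegal_swapAt hω hσ)
        (hfirst.descentsPrecedeAscents_swapAt hinv)
      exact ⟨π, hπ, .head hstep hreach⟩
    · simp only [not_exists] at hasc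
      exact ⟨σ, isLegalMax_of_forall_not_isAscent hσ hasc, .refl⟩

end AscentWalk

theorem card_min_le_card_max_general {n : ℕ} {P : Type*} [PartialOrder P] [Fintype P]
    (ω : P → Fin n)
    (h2 : ∀ x y : P, y < x → ω x ≤ ω y) :
    (Finset.univ.filter fun σ : Fin n ≃ P =>
        OmegaLegal ω σ ∧ ¬ ∃ σ' : Fin n ≃ P, OmegaLegal ω σ' ∧ PermGt σ σ').card ≤
      (Finset.univ.filter fun σ : Fin n ≃ P =>
        OmegaLegal ω σ ∧ ¬ ∃ σ' : Fin n ≃ P, OmegaLegal ω σ' ∧ PermGt σ' σ).card := by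
  choose! f hf hreach using fun σ (hσ : IsLegalMin ω σ) =>
    exists_reflTransGen_ascentStep h2 hσ.1 hσ.descentsPrecedeAscents
  refine Finset.card_le_card_of_injOn f (fun σ hσ => ?_) fun σ₁ h₁ σ₂ h₂ he => ?_
  · exact Finset.mem_filter.mpr ⟨Finset.mem_univ _, hf σ (Finset.mem_filter.mp hσ).2⟩
  · replace h₁ : IsLegalMin ω σ₁ := (Finset.mem_filter.mp h₁).2
    replace h₂ : IsLegalMin ω σ₂ := (Finset.mem_filter.mp h₂).2
    exact (hreach σ₁ h₁).eq_of_leftUnique ascentStep_leftUnique h₁.not_ascentStep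
      h₂.not_ascentStep (he ▸ hreach σ₂ h₂)

theorem card_min_le_card_max {n : ℕ} {P : Type*} [PartialOrder P] [Fintype P]
    (hcard : Fintype.card P = n) (ω : P → Fin n)
    (h1 : ∀ i : Fin n, (i : ℕ) + 1 ≤ (Finset.univ.filter fun x : P => ω x ≤ i).card)
    (h2 : ∀ x y : P, y < x → ω x ≤ ω y) :
    (Finset.univ.filter fun σ : Fin n ≃ P =>
        OmegaLegal ω σ ∧ ¬ ∃ σ' : Fin n ≃ P, OmegaLegal ω σ' ∧ PermGt σ σ').card ≤
      (Finset.univ.filter fun σ : Fin n ≃ P =>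
        OmegaLegal ω σ ∧ ¬ ∃ σ' : Fin n ≃ P, OmegaLegal ω σ' ∧ PermGt σ' σ).card :=
  card_min_le_card_max_general ω h2
end

section
/- Let P be a finite poset on n elements and ω : P → Fin n satisfy: (1) |{x : ω(x) ≤ i}| ≥ i+1 for all i, (2) x > y implies ω(x) ≤ ω(y), and (3) there do not exist x, y, z in P with x < z, y < z, x incomparable to y, and ω(x) < ω(y). Then |Λmin| = |Λmax|, where Λmin and Λmax are the minimal and maximal ω-legal permutations under the lexicographic-by-entries order. -/
/-!
Write `w x = ω x` as a natural number. A legal permutation lies in Λmax iff no entry is below a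
later one, and in Λmin iff no entry `σ k` is below an earlier `σ j` with `w (σ k) ≤ j` (that
transposition would be legal and smaller). Both conditions survive deleting the first entry `u`,
which has weight `0`: the rest is a permutation of `P \ {u}`, legal for the weights `w - 1`. By
induction both counts become sums of the same numbers `f u`, the size of Λmax for `P \ {u}`, over
the weight-`0` elements `u` with no weight-`0` element below them, resp. with no element above
them. The complementary sums agree: swapping the head with the first later entry below it
matches permutations whose head has a weight-`0` element below it with those whose head has an
element above it, and condition (3) is what gives the new head weight `0`.
-/

open scoped Classical

open Finset

lemma Finset.sum_filter_and_not_congr {α M : Type*} [AddCancelCommMonoid M] (s : Finset α)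
    (p a b : α → Prop) [DecidablePred p] [DecidablePred a] [DecidablePred b] (f : α → M)
    (h : ∑ x ∈ s with p x ∧ a x, f x = ∑ x ∈ s with p x ∧ b x, f x) :
    ∑ x ∈ s with p x ∧ ¬ a x, f x = ∑ x ∈ s with p x ∧ ¬ b x, f x := by
  have hsplit : ∀ (c : α → Prop) [DecidablePred c],
      ∑ x ∈ s with p x ∧ c x, f x + ∑ x ∈ s with p x ∧ ¬ c x, f x =
        ∑ x ∈ s with p x, f x := fun c _ => by
    rw [← filter_filter, ← filter_filter, sum_filter_add_sum_filter_not]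
  exact add_left_cancel ((hsplit a).trans (h ▸ hsplit b).symm)

namespace LegalPerm

variable {P : Type*} {n : ℕ}

def IsLegal (w : P → ℕ) (σ : Fin n ≃ P) : Prop := ∀ i, w (σ i) ≤ i

lemma IsLegal.swap_trans {w : P → ℕ} {σ : Fin n ≃ P} (hσ : IsLegal w σ) {j k : Fin n}
    (hjk : j ≤ k) (hk : w (σ k) ≤ j) : IsLegal w ((Equiv.swap j k).trans σ) := by
  intro i
  rcases eq_or_ne i j with rfl | hij
  · simpa using hk
  rcases eq_or_ne i k with rfl | hik
  · simpa using (hσ j).trans hjk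
  · simpa [Equiv.swap_apply_of_ne_of_ne hij hik] using hσ i

lemma swap_trans_apply_of_lt (σ : Fin n ≃ P) {i j k : Fin n} (hij : i < j) (hjk : j < k) :
    (Equiv.swap j k).trans σ i = σ i := by
  simp [Equiv.swap_apply_of_ne_of_ne hij.ne (hij.trans hjk).ne]

lemma lt_symm_apply_of_eqOn {σ π : Fin n ≃ P} {j : Fin n} (hagree : ∀ i < j, σ i = π i)
    (hne : σ j ≠ π j) : j < σ.symm (π j) := by
  by_contra! hle
  rcases hle.lt_or_eq with hlt | heq
  · have := hagree _ hlt
    rw [Equiv.apply_symm_apply] at this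
    exact hlt.ne (π.injective this.symm)
  · exact hne (by simpa using congrArg σ heq.symm)

-- Truncation is harmless: `w x ≤ i + 1 ↔ w x - 1 ≤ i`.
def tailWeight (w : P → ℕ) (u : P) (x : {x // x ≠ u}) : ℕ := w x - 1

section Tail

variable [DecidableEq P]

def tailEquiv (u : P) : {σ : Fin (n + 1) ≃ P // σ 0 = u} ≃ (Fin n ≃ {x // x ≠ u}) :=
  (((finSuccEquiv n).equivCongr (Equiv.refl P)).subtypeEquiv fun σ => by simp).trans
    (Equiv.optionSubtype u)

@[simp]
lemma coe_tailEquiv_apply (u : P) (σ : {σ : Fin (n + 1) ≃ P // σ 0 = u}) (i : Fin n) :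
    (tailEquiv u σ i : P) = σ.1 i.succ := by
  simp [tailEquiv, Equiv.equivCongr_apply_apply]

lemma card_filter_eq_sum_card_filter_tailEquiv [Fintype P] (Q : (Fin (n + 1) ≃ P) → Prop)
    (R : P → Prop) (q : ∀ u : P, (Fin n ≃ {x // x ≠ u}) → Prop) [DecidablePred Q]
    [DecidablePred R] [∀ u, DecidablePred (q u)]
    (h : ∀ u (σ : {σ : Fin (n + 1) ≃ P // σ 0 = u}), Q σ ↔ R u ∧ q u (tailEquiv u σ)) :
    #{σ | Q σ} = ∑ u with R u, #{ρ | q u ρ} := by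
  rw [card_eq_sum_card_fiberwise (f := fun σ => σ 0) (t := univ) (by simp), sum_filter]
  refine sum_congr rfl fun u _ => ?_
  calc #{σ ∈ {σ | Q σ} | σ 0 = u}
      = Fintype.card {σ : {σ : Fin (n + 1) ≃ P // σ 0 = u} // Q σ} := by
        rw [Fintype.card_congr (Equiv.subtypeSubtypeEquivSubtypeInter _ _), Fintype.card_subtype,
          filter_filter]
        simp only [and_comm]
    _ = Fintype.card {ρ // R u ∧ q u ρ} := Fintype.card_congr ((tailEquiv u).subtypeEquiv (h u))
    _ = if R u then #{ρ | q u ρ} else 0 := by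
        split_ifs with hR <;> simp [hR, Fintype.card_subtype]

lemma forall_ne_iff_forall_succ {u : P} (σ : {σ : Fin (n + 1) ≃ P // σ 0 = u})
    {p : P → Prop} :
    (∀ y, y ≠ u → p y) ↔ ∀ i : Fin n, p (σ.1 i.succ) := by
  refine ⟨fun h i => by simpa using h _ (tailEquiv u σ i).2, fun h y hy => ?_⟩
  obtain ⟨i, hi⟩ := (tailEquiv u σ).surjective ⟨y, hy⟩
  have hy : σ.1 i.succ = y := by simpa using congrArg Subtype.val hi
  exact hy ▸ h i

lemma isLegal_iff_tail {w : P → ℕ} {u : P} (σ : {σ : Fin (n + 1) ≃ P // σ 0 = u}) :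
    IsLegal w σ.1 ↔ w u = 0 ∧ IsLegal (tailWeight w u) (tailEquiv u σ) := by
  simp only [IsLegal, Fin.forall_fin_succ, σ.2, tailWeight, coe_tailEquiv_apply, Fin.val_zero,
    Nat.le_zero, Fin.val_succ, Nat.sub_le_iff_le_add]

end Tail

variable [PartialOrder P]

lemma omegaLegal_iff_isLegal (ω : P → Fin n) (σ : Fin n ≃ P) :
    OmegaLegal ω σ ↔ IsLegal (fun x => (ω x : ℕ)) σ :=
  Iff.rfl

def IsLegalMin (w : P → ℕ) (σ : Fin n ≃ P) : Prop :=
  IsLegal w σ ∧ ∀ ⦃j k⦄, j < k → σ k < σ j → (j : ℕ) < w (σ k)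

def IsLegalMax (w : P → ℕ) (σ : Fin n ≃ P) : Prop :=
  IsLegal w σ ∧ ∀ ⦃j k⦄, j < k → ¬ σ j < σ k

lemma isLegalMin_iff {w : P → ℕ} {σ : Fin n ≃ P} :
    IsLegalMin w σ ↔ IsLegal w σ ∧ ¬ ∃ σ', IsLegal w σ' ∧ PermGt σ σ' := by
  refine and_congr_right fun hσ => ⟨?_, fun hmin j k hjk hkj => ?_⟩
  · rintro hmin ⟨σ', hσ', j, hlt, hagree⟩
    have hk := lt_symm_apply_of_eqOn hagree hlt.ne'
    have := hmin hk (by rwa [Equiv.apply_symm_apply])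
    rw [Equiv.apply_symm_apply] at this
    exact (hσ' j).not_gt this
  · by_contra! hk
    exact hmin ⟨_, hσ.swap_trans hjk.le hk, j, by simpa using hkj,
      fun i hi => (swap_trans_apply_of_lt σ hi hjk).symm⟩

lemma isLegalMax_iff {w : P → ℕ} (hw : Antitone w) {σ : Fin n ≃ P} :
    IsLegalMax w σ ↔ IsLegal w σ ∧ ¬ ∃ σ', IsLegal w σ' ∧ PermGt σ' σ := by
  refine and_congr_right fun hσ => ⟨?_, fun hmax j k hjk hjk' => ?_⟩
  · rintro hmax ⟨σ', -, j, hlt, hagree⟩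
    have hk := lt_symm_apply_of_eqOn (fun i hi => (hagree i hi).symm) hlt.ne
    exact hmax hk (by rwa [Equiv.apply_symm_apply])
  · exact hmax ⟨_, hσ.swap_trans hjk.le ((hw hjk'.le).trans (hσ j)), j, by simpa using hjk',
      fun i hi => swap_trans_apply_of_lt σ hi hjk⟩

def IsLegalMaxTail (w : P → ℕ) (σ : Fin (n + 1) ≃ P) : Prop :=
  IsLegal w σ ∧ ∀ ⦃j k⦄, 0 < j → j < k → ¬ σ j < σ k

def WeightEqOnIncomparableBelow (w : P → ℕ) : Prop :=
  ∀ ⦃x y z⦄, x < z → y < z → ¬ x ≤ y → ¬ y ≤ x → w x = w y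

lemma weight_le_of_not_lt {w : P → ℕ} (hw : Antitone w)
    (hinc : WeightEqOnIncomparableBelow w) {x y z : P}
    (hx : x < z) (hy : y < z) (hxy : ¬ x < y) : w x ≤ w y := by
  by_cases hyx : y ≤ x
  · exact hw hyx
  by_cases hxy' : x ≤ y
  · exact le_of_eq (congrArg w (hxy'.eq_of_not_lt hxy))
  · exact (hinc hy hx hyx hxy').ge

lemma antitone_tailWeight {w : P → ℕ} (hw : Antitone w) (u : P) : Antitone (tailWeight w u) :=
  fun _ _ h => Nat.sub_le_sub_right (hw h) 1

lemma WeightEqOnIncomparableBelow.tailWeight {w : P → ℕ} (hinc : WeightEqOnIncomparableBelow w)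
    (u : P) : WeightEqOnIncomparableBelow (tailWeight w u) :=
  fun _ _ _ hxz hyz hxy hyx => congrArg (· - 1) (hinc hxz hyz hxy hyx)

lemma IsLegalMaxTail.swap_of_isLeast {w : P → ℕ} (hw : Antitone w)
    (hinc : WeightEqOnIncomparableBelow w)
    {σ : Fin (n + 1) ≃ P} (hσ : IsLegalMaxTail w σ) (hzero : ∃ y < σ 0, w y = 0)
    {p : Fin (n + 1)} (hp : IsLeast {i | σ i < σ 0} p) :
    IsLegalMaxTail w ((Equiv.swap 0 p).trans σ) ∧
      IsGreatest {i | (Equiv.swap 0 p).trans σ 0 < (Equiv.swap 0 p).trans σ i} p := by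
  obtain ⟨hlegal, htail⟩ := hσ
  have hp0 : 0 < p := pos_of_ne_zero fun h => lt_irrefl (σ 0) (h ▸ hp.1)
  have hwp : w (σ p) = 0 := by
    obtain ⟨y, hy, hy0⟩ := hzero
    obtain ⟨q, rfl⟩ := σ.surjective y
    rcases (hp.2 hy).lt_or_eq with hpq | rfl
    · exact Nat.le_zero.mp (hy0 ▸ weight_le_of_not_lt hw hinc hp.1 hy (htail hp0 hpq))
    · exact hy0
  have hother : ∀ i, i ≠ 0 → i ≠ p → (Equiv.swap 0 p).trans σ i = σ i := fun i h0 hp =>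
    by simp [Equiv.swap_apply_of_ne_of_ne h0 hp]
  refine ⟨⟨hlegal.swap_trans hp0.le (by simp [hwp]), fun j k hj hjk hlt => ?_⟩,
    by simpa using hp.1, fun i hi => ?_⟩
  · rcases eq_or_ne j p with rfl | hjp
    · rw [hother k (hj.trans hjk).ne' hjk.ne'] at hlt
      exact htail hp0 hjk (hp.1.trans (by simpa using hlt))
    rcases eq_or_ne k p with rfl | hkp
    · rw [hother j hj.ne' hjp] at hlt
      exact hjk.not_ge (hp.2 (by simpa using hlt))
    · rw [hother j hj.ne' hjp, hother k (hj.trans hjk).ne' hkp] at hlt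
      exact htail hj hjk hlt
  · by_contra! hpi
    have hi' : σ p < σ i := by
      rw [← hother i (hp0.trans hpi).ne' hpi.ne']
      simpa using hi
    exact htail hp0 hpi hi'

lemma IsLegalMaxTail.swap_of_isGreatest {w : P → ℕ} (hw : Antitone w)
    {τ : Fin (n + 1) ≃ P} (hτ : IsLegalMaxTail w τ) {q : Fin (n + 1)}
    (hq : IsGreatest {i | τ 0 < τ i} q) :
    IsLegalMaxTail w ((Equiv.swap 0 q).trans τ) ∧
      IsLeast {i | (Equiv.swap 0 q).trans τ i < (Equiv.swap 0 q).trans τ 0} q := by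
  obtain ⟨hlegal, htail⟩ := hτ
  have hq0 : 0 < q := pos_of_ne_zero fun h => lt_irrefl (τ 0) (h ▸ hq.1)
  have hother : ∀ i, i ≠ 0 → i ≠ q → (Equiv.swap 0 q).trans τ i = τ i := fun i h0 hq =>
    by simp [Equiv.swap_apply_of_ne_of_ne h0 hq]
  refine ⟨⟨hlegal.swap_trans hq0.le (by simpa using (hw hq.1.le).trans (hlegal 0)),
    fun j k hj hjk hlt => ?_⟩, by simpa using hq.1, fun i hi => ?_⟩
  · rcases eq_or_ne j q with rfl | hjq
    · rw [hother k (hj.trans hjk).ne' hjk.ne'] at hlt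
      exact hjk.not_ge (hq.2 (by simpa using hlt))
    rcases eq_or_ne k q with rfl | hkq
    · rw [hother j hj.ne' hjq] at hlt
      exact htail hj hjk ((by simpa using hlt : τ j < τ 0).trans hq.1)
    · rw [hother j hj.ne' hjq, hother k (hj.trans hjk).ne' hkq] at hlt
      exact htail hj hjk hlt
  · by_contra! hiq
    rcases eq_or_ne i 0 with rfl | hi0
    · exact lt_irrefl _ hi
    have hi' : τ i < τ q := by
      rw [← hother i hi0 hiq.ne]
      simpa using hi
    exact htail (pos_of_ne_zero hi0) hiq hi'

variable [DecidableEq P]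

lemma isLegalMin_iff_tail {w : P → ℕ} {u : P} (σ : {σ : Fin (n + 1) ≃ P // σ 0 = u}) :
    IsLegalMin w σ.1 ↔ (w u = 0 ∧ ¬ ∃ y < u, w y = 0) ∧
      IsLegalMin (tailWeight w u) (tailEquiv u σ) := by
  have hhead :
      (¬ ∃ y < u, w y = 0) ↔ ∀ i : Fin n, σ.1 i.succ < u → 0 < w (σ.1 i.succ) := by
    rw [← forall_ne_iff_forall_succ σ (p := fun y => y < u → 0 < w y)]
    exact ⟨fun h y _ hy => Nat.pos_of_ne_zero fun h0 => h ⟨y, hy, h0⟩,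
      fun h ⟨y, hy, h0⟩ => (h y hy.ne hy).ne' h0⟩
  simp only [IsLegalMin, isLegal_iff_tail σ, Fin.forall_fin_succ, σ.2, Fin.succ_pos,
    Fin.not_lt_zero, Fin.succ_lt_succ_iff, ← Subtype.coe_lt_coe, coe_tailEquiv_apply, tailWeight,
    Fin.val_zero, Fin.val_succ, Nat.lt_sub_iff_add_lt, hhead, false_implies,
    true_implies, true_and]
  tauto

lemma isLegalMax_iff_tail {w : P → ℕ} {u : P} (σ : {σ : Fin (n + 1) ≃ P // σ 0 = u}) :
    IsLegalMax w σ.1 ↔ (w u = 0 ∧ ¬ ∃ z, u < z) ∧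
      IsLegalMax (tailWeight w u) (tailEquiv u σ) := by
  have hhead : (¬ ∃ z, u < z) ↔ ∀ i : Fin n, ¬ u < σ.1 i.succ := by
    rw [← forall_ne_iff_forall_succ σ (p := fun z => ¬ u < z), not_exists]
    exact ⟨fun h z _ => h z, fun h z hz => h z hz.ne' hz⟩
  simp only [IsLegalMax, isLegal_iff_tail σ, Fin.forall_fin_succ, σ.2, Fin.succ_pos,
    Fin.not_lt_zero, Fin.succ_lt_succ_iff, ← Subtype.coe_lt_coe, coe_tailEquiv_apply, hhead,
    false_implies, true_implies, true_and]
  tauto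

lemma isLegalMaxTail_iff_tail {w : P → ℕ} {u : P} (σ : {σ : Fin (n + 1) ≃ P // σ 0 = u}) :
    IsLegalMaxTail w σ.1 ↔ w u = 0 ∧ IsLegalMax (tailWeight w u) (tailEquiv u σ) := by
  simp only [IsLegalMaxTail, IsLegalMax, isLegal_iff_tail σ, Fin.forall_fin_succ, lt_irrefl,
    Fin.succ_pos, Fin.not_lt_zero, Fin.succ_lt_succ_iff, ← Subtype.coe_lt_coe,
    coe_tailEquiv_apply, false_implies, true_implies, implies_true, true_and, and_assoc]

lemma card_isLegalMaxTail_below_eq_card_isLegalMaxTail_above [Fintype P] {w : P → ℕ}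
    (hw : Antitone w) (hinc : WeightEqOnIncomparableBelow w) :
    #{σ : Fin (n + 1) ≃ P | IsLegalMaxTail w σ ∧ ∃ y < σ 0, w y = 0} =
      #{σ : Fin (n + 1) ≃ P | IsLegalMaxTail w σ ∧ ∃ z, σ 0 < z} := by
  have below : ∀ σ : Fin (n + 1) ≃ P, IsLegalMaxTail w σ → (∃ y < σ 0, w y = 0) →
      IsLeast {i | σ i < σ 0} (sInf {i | σ i < σ 0}) := fun σ _ ⟨y, hy, _⟩ =>
    isLeast_csInf ⟨σ.symm y, by simpa using hy⟩
  have above : ∀ τ : Fin (n + 1) ≃ P, (∃ z, τ 0 < z) →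
      IsGreatest {i | τ 0 < τ i} (sSup {i | τ 0 < τ i}) := fun τ ⟨z, hz⟩ =>
    ⟨Set.Nonempty.csSup_mem ⟨τ.symm z, by simpa using hz⟩ (Set.toFinite _),
      fun _ hi => le_sSup hi⟩
  refine card_nbij' (fun σ => (Equiv.swap 0 (sInf {i | σ i < σ 0})).trans σ)
    (fun τ => (Equiv.swap 0 (sSup {i | τ 0 < τ i})).trans τ) ?_ ?_ ?_ ?_
  · intro σ hσ
    simp only [mem_coe, mem_filter, mem_univ, true_and] at hσ ⊢
    obtain ⟨hτ, hp⟩ := hσ.1.swap_of_isLeast hw hinc hσ.2 (below σ hσ.1 hσ.2)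
    exact ⟨hτ, _, hp.1⟩
  · intro τ hτ
    simp only [mem_coe, mem_filter, mem_univ, true_and] at hτ ⊢
    obtain ⟨hσ, hq⟩ := hτ.1.swap_of_isGreatest hw (above τ hτ.2)
    exact ⟨hσ, _, hq.1, by simpa using hτ.1.1 0⟩
  · intro σ hσ
    simp only [mem_coe, mem_filter, mem_univ, true_and] at hσ
    dsimp only
    rw [((hσ.1.swap_of_isLeast hw hinc hσ.2 (below σ hσ.1 hσ.2)).2).csSup_eq]
    ext i
    simp [Equiv.swap_apply_self]
  · intro τ hτ
    simp only [mem_coe, mem_filter, mem_univ, true_and] at hτ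
    dsimp only
    rw [((hτ.1.swap_of_isGreatest hw (above τ hτ.2)).2).csInf_eq]
    ext i
    simp [Equiv.swap_apply_self]

theorem card_isLegalMin_eq_card_isLegalMax [Fintype P] (w : P → ℕ) (hw : Antitone w)
    (hinc : WeightEqOnIncomparableBelow w) :
    #{σ : Fin n ≃ P | IsLegalMin w σ} = #{σ : Fin n ≃ P | IsLegalMax w σ} := by
  induction n generalizing P with
  | zero =>
    have hvacuous : ∀ σ : Fin 0 ≃ P, IsLegalMin w σ ∧ IsLegalMax w σ := fun _ =>
      ⟨⟨finZeroElim, finZeroElim⟩, ⟨finZeroElim, finZeroElim⟩⟩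
    rw [filter_true_of_mem fun σ _ => (hvacuous σ).1,
      filter_true_of_mem fun σ _ => (hvacuous σ).2]
  | succ n ih =>
    let f (u : P) : ℕ := #{ρ : Fin n ≃ {x // x ≠ u} | IsLegalMax (tailWeight w u) ρ}
    have hmin : #{σ : Fin (n + 1) ≃ P | IsLegalMin w σ} =
        ∑ u with w u = 0 ∧ ¬ ∃ y < u, w y = 0, f u := by
      rw [card_filter_eq_sum_card_filter_tailEquiv (IsLegalMin w) _
        (fun u => IsLegalMin (tailWeight w u)) fun u => isLegalMin_iff_tail]
      exact sum_congr rfl fun u _ =>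
        ih (tailWeight w u) (antitone_tailWeight hw u) (hinc.tailWeight u)
    have hmax : #{σ : Fin (n + 1) ≃ P | IsLegalMax w σ} =
        ∑ u with w u = 0 ∧ ¬ ∃ z, u < z, f u :=
      card_filter_eq_sum_card_filter_tailEquiv (IsLegalMax w) _
        (fun u => IsLegalMax (tailWeight w u)) fun u => isLegalMax_iff_tail
    have hbelow : #{σ : Fin (n + 1) ≃ P | IsLegalMaxTail w σ ∧ ∃ y < σ 0, w y = 0} =
        ∑ u with w u = 0 ∧ ∃ y < u, w y = 0, f u :=
      card_filter_eq_sum_card_filter_tailEquiv _ _ (fun u => IsLegalMax (tailWeight w u))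
        fun u σ => by
          rw [isLegalMaxTail_iff_tail, σ.2]
          tauto
    have habove : #{σ : Fin (n + 1) ≃ P | IsLegalMaxTail w σ ∧ ∃ z, σ 0 < z} =
        ∑ u with w u = 0 ∧ ∃ z, u < z, f u :=
      card_filter_eq_sum_card_filter_tailEquiv _ _ (fun u => IsLegalMax (tailWeight w u))
        fun u σ => by
          rw [isLegalMaxTail_iff_tail, σ.2]
          tauto
    rw [hmin, hmax]
    exact sum_filter_and_not_congr _ _ _ _ _ <| hbelow.symm.trans <|
      (card_isLegalMaxTail_below_eq_card_isLegalMaxTail_above hw hinc).trans habove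

end LegalPerm

theorem card_min_eq_card_max_general {n : ℕ} {P : Type*} [PartialOrder P] [Fintype P]
    (ω : P → Fin n)
    (h2 : ∀ x y : P, y < x → ω x ≤ ω y)
    (h3 : ¬ ∃ x y z : P, x < z ∧ y < z ∧ ¬ x ≤ y ∧ ¬ y ≤ x ∧ ω x < ω y) :
    (Finset.univ.filter fun σ : Fin n ≃ P =>
        OmegaLegal ω σ ∧ ¬ ∃ σ' : Fin n ≃ P, OmegaLegal ω σ' ∧ PermGt σ σ').card =
      (Finset.univ.filter fun σ : Fin n ≃ P =>
        OmegaLegal ω σ ∧ ¬ ∃ σ' : Fin n ≃ P, OmegaLegal ω σ' ∧ PermGt σ' σ).card := by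
  have hw : Antitone fun x => (ω x : ℕ) := fun x y hxy =>
    hxy.eq_or_lt.elim (fun h => h ▸ le_rfl) (h2 y x)
  have hinc : LegalPerm.WeightEqOnIncomparableBelow fun x => (ω x : ℕ) :=
    fun x y z hxz hyz hxy hyx => Fin.val_eq_of_eq <| le_antisymm
      (not_lt.mp fun h => h3 ⟨y, x, z, hyz, hxz, hyx, hxy, h⟩)
      (not_lt.mp fun h => h3 ⟨x, y, z, hxz, hyz, hxy, hyx, h⟩)
  simp only [LegalPerm.omegaLegal_iff_isLegal, ← LegalPerm.isLegalMin_iff,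
    ← LegalPerm.isLegalMax_iff hw]
  exact LegalPerm.card_isLegalMin_eq_card_isLegalMax _ hw hinc

theorem card_min_eq_card_max {n : ℕ} {P : Type*} [PartialOrder P] [Fintype P]
    (hcard : Fintype.card P = n) (ω : P → Fin n)
    (h1 : ∀ i : Fin n, (i : ℕ) + 1 ≤ (Finset.univ.filter fun x : P => ω x ≤ i).card)
    (h2 : ∀ x y : P, y < x → ω x ≤ ω y)
    (h3 : ¬ ∃ x y z : P, x < z ∧ y < z ∧ ¬ x ≤ y ∧ ¬ y ≤ x ∧ ω x < ω y) :
    (Finset.univ.filter fun σ : Fin n ≃ P =>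
        OmegaLegal ω σ ∧ ¬ ∃ σ' : Fin n ≃ P, OmegaLegal ω σ' ∧ PermGt σ σ').card =
      (Finset.univ.filter fun σ : Fin n ≃ P =>
        OmegaLegal ω σ ∧ ¬ ∃ σ' : Fin n ≃ P, OmegaLegal ω σ' ∧ PermGt σ' σ).card :=
  card_min_eq_card_max_general ω h2 h3
end

section
/- Let σ be a permutation of the Boolean lattice B_n. If there exist positions i < j < k such that σ i ⊂ σ j, σ k ⊂ σ j, σ i ≠ ∅, and σ k ≠ ∅, then σ contains the pattern {1}{1,2}{2}, i.e., there exist positions p < q < r with σ p ⊂ σ q, σ r ⊂ σ q, and σ p incomparable to σ r. -/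
theorem contains_pattern_of_two_below {n : ℕ} (σ : Fin (2 ^ n) ≃ Finset (Fin n))
    (i j k : Fin (2 ^ n)) (hij : i < j) (hjk : j < k)
    (h1 : σ i ⊂ σ j) (h2 : σ k ⊂ σ j) (h3 : σ i ≠ ∅) (h4 : σ k ≠ ∅) :
    ∃ p q r : Fin (2 ^ n), p < q ∧ q < r ∧ σ p ⊂ σ q ∧ σ r ⊂ σ q ∧
      ¬ σ p ⊆ σ r ∧ ¬ σ r ⊆ σ p := by
  by_cases hik : ¬ σ i ⊆ σ k ∧ ¬ σ k ⊆ σ i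
  · exact ⟨i, j, k, hij, hjk, h1, h2, hik.1, hik.2⟩
  · have hnested : σ i ⊆ σ k ∨ σ k ⊆ σ i := by tauto
    have hT : σ i ∪ σ k ⊂ σ j := by
      rcases hnested with h | h
      · rwa [Finset.union_eq_right.2 h]
      · rwa [Finset.union_eq_left.2 h]
    obtain ⟨c, hcj, hcT⟩ := Finset.exists_of_ssubset hT
    have hci : c ∉ σ i := fun h => hcT (Finset.mem_union_left _ h)
    have hck : c ∉ σ k := fun h => hcT (Finset.mem_union_right _ h)
    set m := σ.symm {c} with hm
    have hσm : σ m = {c} := σ.apply_symm_apply {c}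
    obtain ⟨b, hb⟩ := Finset.nonempty_iff_ne_empty.2 h3
    have hbj : b ∈ σ j := h1.1 hb
    have hbc : b ≠ c := fun h => hci (h ▸ hb)
    have hcsub : ({c} : Finset (Fin n)) ⊂ σ j := by
      constructor
      · simpa using hcj
      · intro h
        exact hbc (Finset.mem_singleton.1 (h hbj))
    have hinc_i1 : ¬ σ i ⊆ ({c} : Finset (Fin n)) := by
      intro h
      exact hci (Finset.mem_singleton.1 (h hb) ▸ hb)
    have hinc_i2 : ¬ ({c} : Finset (Fin n)) ⊆ σ i := by
      intro h
      exact hci (h (Finset.mem_singleton_self c))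
    obtain ⟨d, hd⟩ := Finset.nonempty_iff_ne_empty.2 h4
    have hinc_k1 : ¬ σ k ⊆ ({c} : Finset (Fin n)) := by
      intro h
      exact hck (Finset.mem_singleton.1 (h hd) ▸ hd)
    have hinc_k2 : ¬ ({c} : Finset (Fin n)) ⊆ σ k := by
      intro h
      exact hck (h (Finset.mem_singleton_self c))
    have hmj : m ≠ j := by
      intro h
      apply hcsub.2
      rw [← hσm, h]
    rcases lt_or_gt_of_ne hmj with hlt | hgt
    · exact ⟨m, j, k, hlt, hjk, by rw [hσm]; exact hcsub, h2, by rw [hσm]; exact hinc_k2,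
        by rw [hσm]; exact hinc_k1⟩
    · exact ⟨i, j, m, hij, hgt, h1, by rw [hσm]; exact hcsub, by rw [hσm]; exact hinc_i1,
        by rw [hσm]; exact hinc_i2⟩
end

section
/- A permutation σ of the Boolean lattice B_n avoids the pattern {1}{1,2}{2} if and only if there is a function δ : (B_n \ {∅}) → {L, R} such that in the subsequence of σ obtained by deleting ∅, every element x with δ(x) = L occurs before all elements strictly below x, and every element x with δ(x) = R occurs after all elements strictly below x (where 'below' ranges over nonempty subsets). -/
/-- `σ` contains the pattern `{1}{1,2}{2}`. -/
def ContainsVee {n : ℕ} (σ : Fin (2 ^ n) ≃ Finset (Fin n)) : Prop :=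
  ∃ p q r : Fin (2 ^ n), p < q ∧ q < r ∧ σ p ⊂ σ q ∧ σ r ⊂ σ q ∧
    ¬ σ p ⊆ σ r ∧ ¬ σ r ⊆ σ p

private lemma mkVee {n : ℕ} (σ : Fin (2 ^ n) ≃ Finset (Fin n)) (h : ¬ ContainsVee σ)
    {u v w : Finset (Fin n)}
    (h1 : u ⊂ w) (h2 : v ⊂ w) (h3 : ¬ u ⊆ v) (h4 : ¬ v ⊆ u)
    (hpq : σ.symm u < σ.symm w) (hqr : σ.symm w < σ.symm v) : False :=
  h ⟨σ.symm u, σ.symm w, σ.symm v, hpq, hqr, by simpa using h1, by simpa using h2,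
    by simpa using h3, by simpa using h4⟩

private lemma no_straddle {n : ℕ} (σ : Fin (2 ^ n) ≃ Finset (Fin n)) (h : ¬ ContainsVee σ)
    {x y0 y : Finset (Fin n)} (hy0 : y0.Nonempty) (hy : y.Nonempty)
    (h0 : y0 ⊂ x) (h1 : y ⊂ x)
    (hp : σ.symm y0 < σ.symm x) (hq : σ.symm x < σ.symm y) : False := by
  by_cases hc : y0 ⊆ y ∨ y ⊆ y0
  · -- comparable case: find b ∈ x \ (y0 ∪ y) and use the singleton {b}
    obtain ⟨b, hbx, hb0, hby⟩ : ∃ b ∈ x, b ∉ y0 ∧ b ∉ y := by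
      rcases hc with hc | hc
      · obtain ⟨b, hbx, hby⟩ := Finset.exists_of_ssubset h1
        exact ⟨b, hbx, fun hb => hby (hc hb), hby⟩
      · obtain ⟨b, hbx, hby⟩ := Finset.exists_of_ssubset h0
        exact ⟨b, hbx, hby, fun hb => hby (hc hb)⟩
    have hbs : ({b} : Finset (Fin n)) ⊂ x := by
      refine Finset.ssubset_iff_subset_ne.mpr ⟨Finset.singleton_subset_iff.mpr hbx, ?_⟩
      rintro rfl
      obtain ⟨c, hc⟩ := hy
      have hcx : c ∈ ({b} : Finset (Fin n)) := h1.subset hc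
      rw [Finset.mem_singleton] at hcx
      exact hby (hcx ▸ hc)
    have hb0' : ¬ ({b} : Finset (Fin n)) ⊆ y0 := fun hh =>
      hb0 (Finset.singleton_subset_iff.mp hh)
    have hby' : ¬ ({b} : Finset (Fin n)) ⊆ y := fun hh =>
      hby (Finset.singleton_subset_iff.mp hh)
    have h0b : ¬ y0 ⊆ ({b} : Finset (Fin n)) := by
      intro hh
      rcases Finset.subset_singleton_iff.mp hh with rfl | rfl
      · exact hy0.ne_empty rfl
      · exact hb0 (Finset.mem_singleton_self b)
    have hyb : ¬ y ⊆ ({b} : Finset (Fin n)) := by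
      intro hh
      rcases Finset.subset_singleton_iff.mp hh with rfl | rfl
      · exact hy.ne_empty rfl
      · exact hby (Finset.mem_singleton_self b)
    have hne : σ.symm ({b} : Finset (Fin n)) ≠ σ.symm x := fun hh =>
      hbs.ne (σ.symm.injective hh)
    rcases lt_or_gt_of_ne hne with hlt | hgt
    · exact mkVee σ h hbs h1 hby' hyb hlt hq
    · exact mkVee σ h h0 hbs h0b hb0' hp hgt
  · push_neg at hc
    exact mkVee σ h h0 h1 hc.1 hc.2 hp hq

theorem avoid_vee_iff_delta {n : ℕ} (σ : Fin (2 ^ n) ≃ Finset (Fin n)) :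
    ¬ ContainsVee σ ↔
      ∃ δ : Finset (Fin n) → Bool,
        ∀ x : Finset (Fin n), x.Nonempty → ∀ y : Finset (Fin n), y.Nonempty → y ⊂ x →
          (δ x = true → σ.symm x < σ.symm y) ∧ (δ x = false → σ.symm y < σ.symm x) := by
  classical
  constructor
  · intro h
    refine ⟨fun x => if ∀ y : Finset (Fin n), y.Nonempty → y ⊂ x → σ.symm x < σ.symm y
      then true else false, ?_⟩
    intro x hx y hy hyx
    constructor
    · intro ht
      simp only [] at ht
      by_contra hcon
      rw [if_neg] at ht
      · exact Bool.false_ne_true ht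
      · intro hall
        exact hcon (hall y hy hyx)
    · intro hf
      simp only [] at hf
      split_ifs at hf with hall
      push_neg at hall
      obtain ⟨y0, hy0, hy0x, hy0p⟩ := hall
      have hne0 : σ.symm y0 ≠ σ.symm x := fun hh => hy0x.ne (σ.symm.injective hh)
      have hp : σ.symm y0 < σ.symm x := lt_of_le_of_ne hy0p hne0
      by_contra hcon
      have hne : σ.symm x ≠ σ.symm y := fun hh => hyx.ne (σ.symm.injective hh).symm
      have hq : σ.symm x < σ.symm y := lt_of_le_of_ne (not_lt.mp hcon) hne
      exact no_straddle σ h hy0 hy hy0x hyx hp hq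
  · rintro ⟨δ, hδ⟩ ⟨p, q, r, hpq, hqr, hs1, hs2, hn1, hn2⟩
    have hpne : (σ p).Nonempty := Finset.nonempty_iff_ne_empty.mpr
      (fun hh => hn1 (hh ▸ Finset.empty_subset _))
    have hrne : (σ r).Nonempty := Finset.nonempty_iff_ne_empty.mpr
      (fun hh => hn2 (hh ▸ Finset.empty_subset _))
    have hqne : (σ q).Nonempty := hpne.mono hs1.subset
    have h1 := hδ (σ q) hqne (σ p) hpne hs1
    have h2 := hδ (σ q) hqne (σ r) hrne hs2
    rw [Equiv.symm_apply_apply, Equiv.symm_apply_apply] at h1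
    rw [Equiv.symm_apply_apply, Equiv.symm_apply_apply] at h2
    cases hb : δ (σ q)
    · exact absurd (h2.2 hb) (not_lt.mpr hqr.le)
    · exact absurd (h1.1 hb) (not_lt.mpr hpq.le)
end

section
/- Let P be a finite poset and δ : P → {L, R}. Call a permutation σ of P δ-legal if for each x with δ(x) = L, x occurs before every element strictly less than x, and for each x with δ(x) = R, x occurs after every element strictly less than x. Then the number of δ-legal permutations of P is at most the number of linear extensions of P (i.e., of δ_R-legal permutations where δ_R ≡ R). -/
open scoped Classical

/-- `σ` is `δ`-legal: each `x` with `δ x = true` (i.e. `L`) occurs before every element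
strictly below it, and each `x` with `δ x = false` (i.e. `R`) occurs after every element
strictly below it. -/
def DeltaLegal {n : ℕ} {P : Type*} [PartialOrder P] (δ : P → Bool) (σ : Fin n ≃ P) : Prop :=
  ∀ x y : P, y < x →
    (δ x = true → σ.symm x < σ.symm y) ∧ (δ x = false → σ.symm y < σ.symm x)

/-!
Write a permutation of a finite set `s` as a list; for a pairwise condition `Q` ("`a` may stand
before `b`") the possible first entries of an admissible list are the `heads` of `s`, and
removing the first entry gives `#arr(s) = ∑_{p head} #arr(s \ p)`. For linear extensions the
heads are the minimal elements; for `δ`-legal lists they form an antichain, because a head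
lying above another head would have to be labelled both `L` and `R`. By induction the theorem
therefore reduces to the inequality `∑_{a ∈ A} e(s \ a) ≤ e(s)` for antichains `A ⊆ s`, where
`e` counts linear extensions. To prove it, expand each `e(s \ a)` over the minimal elements of
`s \ a`: the minimal elements `m ≠ a` of `s` and the elements that only become minimal once `a`
is removed. Grouping the terms by the minimal element `m` of `s` removed first leaves, for each
`m`, the same inequality in `s \ m` for the antichain `A \ {m}`, enlarged by the new minimal
elements when `m ∈ A`; summing over `m` gives `e(s)`.
-/

open Finset

namespace LinearExtension

variable {α : Type*}

noncomputable def arrangements (Q : α → α → Prop) (s : Finset α) : Finset (List α) :=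
  s.toList.permutations.toFinset.filter (List.Pairwise Q)

noncomputable def heads (Q : α → α → Prop) (s : Finset α) : Finset α :=
  s.filter fun p => ∀ x ∈ s, x ≠ p → Q p x

section Arrangements

variable {Q : α → α → Prop} {s : Finset α}

theorem heads_subset : heads Q s ⊆ s := filter_subset _ _

theorem mem_arrangements {l : List α} :
    l ∈ arrangements Q s ↔ l.Nodup ∧ l.toFinset = s ∧ l.Pairwise Q := by
  rw [arrangements, mem_filter, List.mem_toFinset, List.mem_permutations, ← and_assoc]
  refine and_congr_left fun _ => ⟨fun h => ⟨h.nodup_iff.2 s.nodup_toList, ?_⟩, fun h => ?_⟩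
  · simpa using List.toFinset_eq_of_perm _ _ h
  · exact List.perm_of_nodup_nodup_toFinset_eq h.1 s.nodup_toList (by simpa using h.2)

theorem arrangements_empty : arrangements Q ∅ = {[]} := by
  ext l
  simp only [mem_arrangements, List.toFinset_eq_empty_iff, mem_singleton]
  exact ⟨fun h => h.2.1, by rintro rfl; simp⟩

theorem cons_mem_arrangements {p : α} {t : List α} :
    p :: t ∈ arrangements Q s ↔ p ∈ heads Q s ∧ t ∈ arrangements Q (s.erase p) := by
  simp only [mem_arrangements, heads, mem_filter, List.nodup_cons, List.pairwise_cons,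
    List.toFinset_cons]
  constructor
  · rintro ⟨⟨hpt, ht⟩, rfl, hQ, htQ⟩
    refine ⟨⟨mem_insert_self _ _, fun x hx hxp => hQ x ?_⟩, ht, ?_, htQ⟩
    · simpa [hxp] using hx
    · rw [erase_insert (by simpa using hpt)]
  · rintro ⟨⟨hps, hQ⟩, ht, hts, htQ⟩
    refine ⟨⟨fun hpt => ?_, ht⟩, by rw [hts, insert_erase hps], fun x hx => ?_, htQ⟩
    · simpa [hts] using List.mem_toFinset.2 hpt
    · have hxs : x ∈ s.erase p := hts ▸ List.mem_toFinset.2 hx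
      exact hQ x (mem_of_mem_erase hxs) (ne_of_mem_erase hxs)

theorem card_arrangements_eq_sum_heads (hs : s.Nonempty) :
    #(arrangements Q s) = ∑ p ∈ heads Q s, #(arrangements Q (s.erase p)) := by
  rw [← card_sigma]
  symm
  refine card_bij (fun x _ => x.1 :: x.2) (fun x hx => ?_) (fun x _ y _ h => ?_) fun l hl => ?_
  · exact cons_mem_arrangements.2 (mem_sigma.1 hx)
  · simp only [List.cons.injEq] at h
    exact Sigma.ext h.1 (heq_of_eq h.2)
  · obtain _ | ⟨p, t⟩ := l
    · simp [mem_arrangements, hs.ne_empty.symm] at hl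
    · exact ⟨⟨p, t⟩, mem_sigma.2 (cons_mem_arrangements.1 hl), rfl⟩

end Arrangements

theorem card_filter_equiv_pairwise_eq_card_arrangements [Fintype α] {n : ℕ}
    (hcard : Fintype.card α = n) (Q : α → α → Prop)
    [DecidablePred fun σ : Fin n ≃ α => ∀ i j, i < j → Q (σ i) (σ j)] :
    #{σ : Fin n ≃ α | ∀ i j, i < j → Q (σ i) (σ j)} = #(arrangements Q univ) := by
  refine card_bij (fun σ _ => List.ofFn σ) (fun σ hσ => ?_) (fun σ _ τ _ h => ?_)
    fun l hl => ?_
  · refine mem_arrangements.2 ⟨List.nodup_ofFn.2 σ.injective, ?_, List.pairwise_ofFn.2 ?_⟩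
    · ext x
      simpa [List.mem_ofFn] using σ.surjective x
    · exact fun i j hij => (mem_filter.1 hσ).2 i j hij
  · exact Equiv.coe_fn_injective (List.ofFn_injective h)
  · obtain ⟨hnd, huniv, hQ⟩ := mem_arrangements.1 hl
    have hmem (x : α) : x ∈ l := List.mem_toFinset.1 (huniv ▸ mem_univ x)
    have hlen : l.length = n := by
      rw [← hcard, ← card_univ, ← huniv, List.toFinset_card_of_nodup hnd]
    set σ : Fin n ≃ α := (finCongr hlen.symm).trans (hnd.getEquivOfForallMemList l hmem)
    have hσ : List.ofFn σ = l := by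
      subst hlen
      exact List.ofFn_get l
    refine ⟨σ, mem_filter.2 ⟨mem_univ _, fun i j hij => ?_⟩, hσ⟩
    rw [← hσ] at hQ
    exact List.pairwise_ofFn.1 hQ hij

section Poset

variable [PartialOrder α]

noncomputable def linearExtensions (s : Finset α) : Finset (List α) :=
  arrangements (fun a b => ¬ b < a) s

noncomputable def mins (s : Finset α) : Finset α :=
  s.filter fun m => ∀ x ∈ s, ¬ x < m

noncomputable def newMins (s : Finset α) (a : α) : Finset α :=
  mins (s.erase a) \ mins s

variable {s : Finset α} {a q : α}

theorem mins_subset : mins s ⊆ s := filter_subset _ _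

theorem heads_not_lt_eq_mins : heads (fun a b => ¬ b < a) s = mins s := by
  ext p
  simp only [heads, mins, mem_filter]
  exact and_congr_right fun _ =>
    ⟨fun h x hx hxp => h x hx hxp.ne hxp, fun h x hx _ => h x hx⟩

theorem card_linearExtensions_eq_sum_mins (hs : s.Nonempty) :
    #(linearExtensions s) = ∑ m ∈ mins s, #(linearExtensions (s.erase m)) := by
  rw [linearExtensions, card_arrangements_eq_sum_heads hs, heads_not_lt_eq_mins]
  rfl

theorem mins_erase_eq_union : mins (s.erase a) = (mins s).erase a ∪ newMins s a := by
  ext m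
  simp only [newMins, mins, mem_union, mem_erase, mem_sdiff, mem_filter]
  grind

theorem disjoint_erase_mins_newMins : Disjoint ((mins s).erase a) (newMins s a) :=
  disjoint_left.2 fun _ hm hm' => (mem_sdiff.1 hm').2 (mem_of_mem_erase hm)

theorem newMins_subset : newMins s a ⊆ s.erase a :=
  sdiff_subset.trans mins_subset

theorem not_lt_of_mem_newMins (hq : q ∈ newMins s a) {x : α} (hx : x ∈ s) (hxa : x ≠ a) :
    ¬ x < q :=
  (mem_filter.1 (mem_sdiff.1 hq).1).2 x (mem_erase.2 ⟨hxa, hx⟩)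

theorem lt_of_mem_newMins (hq : q ∈ newMins s a) : a < q := by
  have hqs : q ∈ s := mem_of_mem_erase (newMins_subset hq)
  obtain ⟨x, hx, hxq⟩ : ∃ x ∈ s, x < q := by
    by_contra! h
    exact (mem_sdiff.1 hq).2 (mem_filter.2 ⟨hqs, h⟩)
  obtain rfl : x = a := by_contra fun hxa => not_lt_of_mem_newMins hq hx hxa hxq
  exact hxq

theorem mem_mins_of_mem_newMins (hq : q ∈ newMins s a) : a ∈ mins s := by
  have has : a ∈ s := by
    by_contra has
    simp [newMins, erase_eq_of_notMem has] at hq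
  exact mem_filter.2 ⟨has, fun x hx hxa =>
    not_lt_of_mem_newMins hq hx hxa.ne (hxa.trans (lt_of_mem_newMins hq))⟩

theorem sum_card_linearExtensions_erase_eq {A : Finset α}
    (hA : ∀ a ∈ A, (s.erase a).Nonempty) :
    ∑ a ∈ A, #(linearExtensions (s.erase a)) =
      ∑ m ∈ mins s, (∑ a ∈ A.erase m, #(linearExtensions ((s.erase m).erase a)) +
        if m ∈ A then ∑ q ∈ newMins s m, #(linearExtensions ((s.erase m).erase q))
        else 0) := by
  calc ∑ a ∈ A, #(linearExtensions (s.erase a))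
      = ∑ a ∈ A, (∑ m ∈ (mins s).erase a, #(linearExtensions ((s.erase a).erase m)) +
          ∑ q ∈ newMins s a, #(linearExtensions ((s.erase a).erase q))) := by
        refine sum_congr rfl fun a ha => ?_
        rw [card_linearExtensions_eq_sum_mins (hA a ha), mins_erase_eq_union,
          sum_union disjoint_erase_mins_newMins]
    _ = ∑ m ∈ mins s, ∑ a ∈ A.erase m, #(linearExtensions ((s.erase m).erase a)) +
          ∑ m ∈ mins s, if m ∈ A then
            ∑ q ∈ newMins s m, #(linearExtensions ((s.erase m).erase q)) else 0 := by
        rw [sum_add_distrib]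
        congr 1
        · rw [sum_comm' (t' := mins s) (s' := A.erase) (by simp only [mem_erase]; tauto)]
          simp only [erase_right_comm]
        · rw [sum_ite_mem, inter_comm]
          refine (sum_subset inter_subset_left fun a haA ha => ?_).symm
          rw [sum_eq_zero fun q hq => absurd (mem_inter.2 ⟨haA, mem_mins_of_mem_newMins hq⟩) ha]
    _ = _ := sum_add_distrib.symm

theorem disjoint_erase_newMins {A : Finset α} (hA : IsAntichain (· ≤ ·) (A : Set α))
    (ha : a ∈ A) : Disjoint (A.erase a) (newMins s a) :=
  disjoint_left.2 fun _ hx hx' => hA.not_lt ha (mem_of_mem_erase hx) (lt_of_mem_newMins hx')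

theorem isAntichain_erase_union_newMins {A : Finset α} (hAs : A ⊆ s)
    (hA : IsAntichain (· ≤ ·) (A : Set α)) (ha : a ∈ A) :
    IsAntichain (· ≤ ·) (↑(A.erase a ∪ newMins s a) : Set α) := by
  have hsub : A.erase a ∪ newMins s a ⊆ s.erase a :=
    union_subset (erase_subset_erase a hAs) newMins_subset
  refine isAntichain_iff_forall_not_lt.2 fun x hx y hy hxy => ?_
  obtain ⟨hxa, hxs⟩ := mem_erase.1 (hsub hx)
  rcases mem_union.1 hy with hy | hy
  · rcases mem_union.1 hx with hx | hx
    · exact hA.not_lt (mem_of_mem_erase hx) (mem_of_mem_erase hy) hxy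
    · exact hA.not_lt ha (mem_of_mem_erase hy) ((lt_of_mem_newMins hx).trans hxy)
  · exact not_lt_of_mem_newMins hy hxs hxa hxy

theorem sum_card_linearExtensions_erase_le {A : Finset α} (hAs : A ⊆ s)
    (hA : IsAntichain (· ≤ ·) (A : Set α)) :
    ∑ a ∈ A, #(linearExtensions (s.erase a)) ≤ #(linearExtensions s) := by
  induction s using Finset.strongInduction generalizing A with
  | H s ih =>
  rcases A.eq_empty_or_nonempty with rfl | ⟨a₀, ha₀⟩
  · simp
  by_cases hempty : ∃ a ∈ A, s.erase a = ∅
  · obtain ⟨a, ha, hsa⟩ := hempty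
    obtain rfl : s = {a} :=
      ((erase_eq_empty_iff s a).1 hsa).resolve_left (ne_empty_of_mem (hAs ha))
    obtain rfl : A = {a} := (subset_singleton_iff.1 hAs).resolve_left (ne_empty_of_mem ha)
    rw [sum_singleton, hsa, linearExtensions, arrangements_empty, card_singleton, one_le_card]
    exact ⟨[a], by simp [linearExtensions, mem_arrangements]⟩
  push Not at hempty
  rw [sum_card_linearExtensions_erase_eq hempty,
    card_linearExtensions_eq_sum_mins ⟨a₀, hAs ha₀⟩]
  refine sum_le_sum fun m hm => ?_
  have hlt : s.erase m ⊂ s := erase_ssubset (mins_subset hm)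
  by_cases hmA : m ∈ A
  · rw [if_pos hmA, ← sum_union (disjoint_erase_newMins hA hmA)]
    exact ih _ hlt (union_subset (erase_subset_erase m hAs) newMins_subset)
      (isAntichain_erase_union_newMins hAs hA hmA)
  · rw [if_neg hmA, add_zero, erase_eq_of_notMem hmA]
    exact ih _ hlt (subset_erase.2 ⟨hAs, hmA⟩) hA

theorem card_arrangements_le_card_linearExtensions {Q : α → α → Prop}
    (hQ : ∀ s : Finset α, IsAntichain (· ≤ ·) (heads Q s : Set α)) (s : Finset α) :
    #(arrangements Q s) ≤ #(linearExtensions s) := by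
  induction s using Finset.strongInduction with
  | H s ih =>
  rcases s.eq_empty_or_nonempty with rfl | hs
  · simp [linearExtensions, arrangements_empty]
  calc #(arrangements Q s)
      = ∑ p ∈ heads Q s, #(arrangements Q (s.erase p)) := card_arrangements_eq_sum_heads hs
    _ ≤ ∑ p ∈ heads Q s, #(linearExtensions (s.erase p)) :=
        sum_le_sum fun p hp => ih _ (erase_ssubset (heads_subset hp))
    _ ≤ #(linearExtensions s) := sum_card_linearExtensions_erase_le heads_subset (hQ s)

end Poset

end LinearExtension

open LinearExtension

section Legal

variable {α : Type*} [PartialOrder α]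

def LegalBefore (δ : α → Bool) (a b : α) : Prop :=
  (b < a → δ a = true) ∧ (a < b → δ b = false)

theorem isAntichain_heads_legalBefore (δ : α → Bool) (s : Finset α) :
    IsAntichain (· ≤ ·) (heads (LegalBefore δ) s : Set α) := by
  refine isAntichain_iff_forall_not_lt.2 fun x hx y hy hxy => ?_
  have hyx := (mem_filter.1 hy).2 x (mem_filter.1 hx).1 hxy.ne
  have hxy' := (mem_filter.1 hx).2 y (mem_filter.1 hy).1 hxy.ne'
  simpa [hyx.1 hxy] using hxy'.2 hxy

theorem DeltaLegal.legalBefore {n : ℕ} {δ : α → Bool} {σ : Fin n ≃ α}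
    (h : DeltaLegal δ σ) {i j : Fin n} (hij : i < j) : LegalBefore δ (σ i) (σ j) := by
  constructor
  · intro hlt
    by_contra hδ
    exact hij.asymm (by simpa using (h _ _ hlt).2 (by simpa using hδ))
  · intro hlt
    by_contra hδ
    exact hij.asymm (by simpa using (h _ _ hlt).1 (by simpa using hδ))

end Legal

theorem card_delta_legal_le_card_linear_extensions {n : ℕ} {P : Type*}
    [PartialOrder P] [Fintype P] (hcard : Fintype.card P = n) (δ : P → Bool) :
    (Finset.univ.filter fun σ : Fin n ≃ P => DeltaLegal δ σ).card ≤
      (Finset.univ.filter fun σ : Fin n ≃ P => ∀ i j : Fin n, σ i < σ j → i < j).card := by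
  calc #{σ : Fin n ≃ P | DeltaLegal δ σ}
      ≤ #{σ : Fin n ≃ P | ∀ i j, i < j → LegalBefore δ (σ i) (σ j)} :=
        card_le_card (monotone_filter_right _ fun σ _ h _ _ => h.legalBefore)
    _ = #(arrangements (LegalBefore δ) univ) :=
        card_filter_equiv_pairwise_eq_card_arrangements hcard _
    _ ≤ #(linearExtensions univ) :=
        card_arrangements_le_card_linearExtensions (isAntichain_heads_legalBefore δ) univ
    _ = #{σ : Fin n ≃ P | ∀ i j, i < j → ¬ σ j < σ i} :=
        (card_filter_equiv_pairwise_eq_card_arrangements hcard _).symm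
    _ ≤ #{σ : Fin n ≃ P | ∀ i j, σ i < σ j → i < j} := by
        refine card_le_card (monotone_filter_right _ fun σ _ h i j hlt => ?_)
        rcases lt_trichotomy i j with hij | rfl | hji
        · exact hij
        · exact absurd hlt (lt_irrefl _)
        · exact absurd hlt (h j i hji)
end

section
/- Let P be a finite poset and δ : P → {L, R}, and suppose there exist x, y, z ∈ P with z < x, z < y, x incomparable to y, and δ(x) ≠ δ(y). Then the number of δ-legal permutations of P is strictly less than the number of linear extensions of P. -/
open scoped Classical

/-!
Write `e(s)` for the number of linear extensions of a finite poset `s`. Both `e(s)` and the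
number of `δ`-legal orderings satisfy a recursion over the element placed first: for `e` it
ranges over the minimal elements, for legal orderings over an antichain `F` of admissible first
elements. The heart of the argument is that `∑ a ∈ A, e(s \ a) ≤ e(s)` for every antichain
`A ⊆ s`. It is proved by induction on `s`: expanding `e(s \ a)` once more along the minimal
elements of `s` turns both sides into sums over the possible first two elements `(m, v)` of a
linear extension, and swapping `m` and `v` compares them. Induction then bounds the number of
legal orderings by `e(s)`.

For strictness take `z < x`, `z < y` with `x`, `y` incomparable and `δ x = L`, `δ y = R`.
Neither `y` nor `z` may come first, so either some admissible first element other than `x`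
leaves the witnesses in place and induction applies, or `x` is the only one and
`e(s \ x) < e(s \ x) + e(s \ y) ≤ e(s)` by the antichain inequality for `{x, y}`.
-/

open Finset

namespace LegalOrdering

section Orderings

variable {α : Type*} (R : α → α → Prop)

noncomputable def orderings (s : Finset α) : Finset (List α) :=
  {l ∈ s.toList.permutations.toFinset | l.Pairwise R}

noncomputable def heads (s : Finset α) : Finset α :=
  {a ∈ s | ∀ b ∈ s, b ≠ a → R a b}

variable {R}

theorem mem_orderings {s : Finset α} {l : List α} :
    l ∈ orderings R s ↔ l.Nodup ∧ l.toFinset = s ∧ l.Pairwise R := by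
  simp only [orderings, mem_filter, List.mem_toFinset, List.mem_permutations]
  constructor
  · rintro ⟨hl, hR⟩
    exact ⟨hl.nodup_iff.2 s.nodup_toList, by rw [List.toFinset_eq_of_perm _ _ hl,
      toList_toFinset], hR⟩
  · rintro ⟨hnd, rfl, hR⟩
    exact ⟨List.perm_of_nodup_nodup_toFinset_eq hnd (nodup_toList _) (by simp), hR⟩

theorem orderings_empty : orderings R ∅ = {[]} := by
  ext l
  simp only [mem_orderings, List.toFinset_eq_empty_iff, mem_singleton]
  constructor
  · exact fun h => h.2.1
  · rintro rfl
    simp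

theorem cons_mem_orderings {s : Finset α} {a : α} {l : List α} :
    a :: l ∈ orderings R s ↔ a ∈ heads R s ∧ l ∈ orderings R (s.erase a) := by
  simp only [mem_orderings, heads, mem_filter, List.nodup_cons, List.pairwise_cons,
    List.toFinset_cons]
  constructor
  · rintro ⟨⟨hal, hnd⟩, rfl, haR, hR⟩
    refine ⟨⟨mem_insert_self _ _, fun b hb hba => haR b ?_⟩, hnd, ?_, hR⟩
    · simpa [hba] using hb
    · rw [erase_insert (by simpa using hal)]
  · rintro ⟨⟨has, haR⟩, hnd, hl, hR⟩
    have hal : a ∉ l := fun h => notMem_erase a s (hl ▸ List.mem_toFinset.2 h)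
    refine ⟨⟨hal, hnd⟩, by rw [hl, insert_erase has], fun b hb => haR b ?_ ?_, hR⟩
    · exact mem_of_mem_erase (hl ▸ List.mem_toFinset.2 hb)
    · rintro rfl
      exact hal hb

theorem card_orderings {s : Finset α} (hs : s.Nonempty) :
    #(orderings R s) = ∑ a ∈ heads R s, #(orderings R (s.erase a)) := by
  rw [← card_sigma]
  refine (card_bij (fun p _ => p.1 :: p.2) ?_ ?_ ?_).symm
  · rintro ⟨a, l⟩ h
    exact cons_mem_orderings.2 (mem_sigma.1 h)
  · rintro ⟨a, l⟩ - ⟨b, m⟩ - h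
    obtain ⟨rfl, rfl⟩ := List.cons_eq_cons.1 h
    rfl
  · rintro (_ | ⟨a, l⟩) h
    · simp [mem_orderings, hs.ne_empty.symm] at h
    · exact ⟨⟨a, l⟩, mem_sigma.2 (cons_mem_orderings.1 h), rfl⟩

theorem card_equivFin_pairwise [Fintype α] {n : ℕ} (hn : Fintype.card α = n) :
    #{σ : Fin n ≃ α | ∀ i j, i < j → R (σ i) (σ j)} = #(orderings R univ) := by
  refine card_bij (fun σ _ => List.ofFn σ) ?_ ?_ ?_
  · intro σ hσ
    refine mem_orderings.2 ⟨List.nodup_ofFn.2 σ.injective, ?_,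
      List.pairwise_ofFn.2 (mem_filter.1 hσ).2⟩
    ext a
    simpa using ⟨σ.symm a, σ.apply_symm_apply a⟩
  · intro σ _ τ _ h
    exact Equiv.coe_fn_injective (List.ofFn_injective h)
  · intro l hl
    obtain ⟨hnd, hl, hR⟩ := mem_orderings.1 hl
    have hmem : ∀ a, a ∈ l := fun a => List.mem_toFinset.1 (hl ▸ mem_univ a)
    have hlen : l.length = n := by
      rw [← hn, ← card_univ, ← hl, List.toFinset_card_of_nodup hnd]
    subst hlen
    refine ⟨hnd.getEquivOfForallMemList l hmem, ?_, List.ofFn_get l⟩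
    simpa [List.ofFn_get] using List.pairwise_ofFn.1 ((List.ofFn_get l).symm ▸ hR)

theorem sum_filter_snd_le_sum_filter_fst {P : Finset (α × α)} {q : α → Prop}
    [DecidablePred q] {f : α × α → ℕ} (hf : ∀ p, f p.swap = f p)
    (hP : ∀ p ∈ P, ¬ q p.1 → q p.2 → p.swap ∈ P) :
    ∑ p ∈ P with q p.2, f p ≤ ∑ p ∈ P with q p.1, f p := by
  set L := {p ∈ P | q p.2}
  set U := {p ∈ P | q p.1}
  have hswap : (L \ U).image Prod.swap ⊆ U \ L := by
    simp only [image_subset_iff, L, U, mem_sdiff, mem_filter, not_and]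
    exact fun p ⟨⟨hp, hq₂⟩, hq₁⟩ =>
      ⟨⟨hP p hp (hq₁ hp) hq₂, hq₂⟩, fun _ => hq₁ hp⟩
  calc ∑ p ∈ L, f p = ∑ p ∈ L ∩ U, f p + ∑ p ∈ (L \ U).image Prod.swap, f p := by
        rw [sum_image Prod.swap_injective.injOn, ← sum_inter_add_sum_sdiff L U]
        simp only [hf]
    _ ≤ ∑ p ∈ U ∩ L, f p + ∑ p ∈ U \ L, f p := by
        rw [inter_comm]
        gcongr
    _ = ∑ p ∈ U, f p := sum_inter_add_sum_sdiff U L f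

end Orderings

section LinearExtensions

variable {α : Type*} [PartialOrder α]

noncomputable def minimals (s : Finset α) : Finset α := {m ∈ s | Minimal (· ∈ s) m}

noncomputable def numLinExt (s : Finset α) : ℕ := #(orderings (fun a b => ¬ b < a) s)

theorem mem_minimals {s : Finset α} {m : α} : m ∈ minimals s ↔ Minimal (· ∈ s) m := by
  simpa [minimals] using Minimal.prop

theorem minimals_subset (s : Finset α) : minimals s ⊆ s := filter_subset _ _

theorem heads_not_lt_eq_minimals (s : Finset α) : heads (fun a b => ¬ b < a) s = minimals s := by
  ext m
  simp only [heads, mem_filter, mem_minimals, minimal_iff_forall_lt]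
  exact ⟨fun h => ⟨h.1, fun b hb hbs => h.2 b hbs hb.ne hb⟩,
    fun h => ⟨h.1, fun b hbs _ hb => h.2 hb hbs⟩⟩

theorem numLinExt_eq_sum {s : Finset α} (hs : s.Nonempty) :
    numLinExt s = ∑ m ∈ minimals s, numLinExt (s.erase m) := by
  rw [numLinExt, card_orderings hs, heads_not_lt_eq_minimals]
  rfl

theorem sum_minimals_le_numLinExt (s : Finset α) :
    ∑ m ∈ minimals s, numLinExt (s.erase m) ≤ numLinExt s := by
  rcases s.eq_empty_or_nonempty with rfl | hs
  · simp [minimals]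
  · exact (numLinExt_eq_sum hs).ge

theorem numLinExt_pos (s : Finset α) : 0 < numLinExt s := by
  induction s using Finset.strongInduction with
  | H s ih =>
    rcases s.eq_empty_or_nonempty with rfl | hs
    · simp [numLinExt, orderings_empty]
    · obtain ⟨m, hm⟩ := s.exists_minimal hs
      rw [numLinExt_eq_sum hs]
      exact sum_pos' (fun _ _ => Nat.zero_le _)
        ⟨m, mem_minimals.2 hm, ih _ (erase_ssubset hm.prop)⟩

theorem exists_lt_of_notMem_minimals {s : Finset α} {a : α} (ha : a ∈ s)
    (ha' : a ∉ minimals s) : ∃ z ∈ s, z < a := by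
  simpa [mem_minimals, minimal_iff_forall_lt, ha, and_comm] using ha'

theorem minimals_erase {s : Finset α} {a : α} (ha : a ∈ s) (ha' : a ∉ minimals s) :
    minimals (s.erase a) = minimals s := by
  obtain ⟨z, hz, hza⟩ := exists_lt_of_notMem_minimals ha ha'
  ext m
  simp only [mem_minimals, minimal_iff_forall_lt, mem_erase]
  constructor
  · rintro ⟨⟨-, hm⟩, hmin⟩
    refine ⟨hm, fun y hym hy => ?_⟩
    obtain rfl | hya := eq_or_ne y a
    · exact hmin (hza.trans hym) ⟨hza.ne, hz⟩
    · exact hmin hym ⟨hya, hy⟩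
  · rintro ⟨hm, hmin⟩
    exact ⟨⟨by rintro rfl; exact hmin hza hz, hm⟩, fun y hym hy => hmin hym hy.2⟩

theorem numLinExt_erase_eq_sum {s : Finset α} {a : α} (ha : a ∈ s) (ha' : a ∉ minimals s) :
    numLinExt (s.erase a) = ∑ m ∈ minimals s, numLinExt ((s.erase m).erase a) := by
  obtain ⟨z, hz, hza⟩ := exists_lt_of_notMem_minimals ha ha'
  rw [numLinExt_eq_sum ⟨z, mem_erase.2 ⟨hza.ne, hz⟩⟩, minimals_erase ha ha']
  exact sum_congr rfl fun m _ => by rw [erase_right_comm]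

theorem swap_mem_minimals {D : LowerSet α} {s : Finset α} {m v : α} (hm : m ∈ minimals s)
    (hv : v ∈ minimals (s.erase m)) (hmD : m ∉ D) (hvD : v ∈ D) :
    v ∈ minimals s ∧ m ∈ minimals (s.erase v) := by
  simp only [mem_minimals, minimal_iff_forall_lt, mem_erase] at *
  have hmv : m ≠ v := by
    rintro rfl
    exact hmD hvD
  refine ⟨⟨hv.1.2, fun y hyv hy => hv.2 hyv ⟨?_, hy⟩⟩, ⟨hmv, hm.1⟩,
    fun y hym hy => hm.2 hym hy.2⟩
  rintro rfl
  exact hmD (D.lower hyv.le hvD)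

/-- Both sides sum `numLinExt (s \ {m, v})` over the possible first two elements `m, v` of a
linear extension, the left side over those with `v ∈ D` and the right side over those with
`m ∈ D`; swapping `m` and `v` injects the first index set into the second. -/
theorem sum_sum_minimals_le (D : LowerSet α) [DecidablePred (· ∈ D)] (s : Finset α) :
    ∑ m ∈ minimals s, ∑ v ∈ minimals (s.erase m) with v ∈ D,
        numLinExt ((s.erase m).erase v) ≤
      ∑ m ∈ minimals s with m ∈ D, numLinExt (s.erase m) := by
  set P := {p ∈ s ×ˢ s | p.1 ∈ minimals s ∧ p.2 ∈ minimals (s.erase p.1)}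
  have hP : ∀ p, p ∈ P ↔ p.1 ∈ minimals s ∧ p.2 ∈ minimals (s.erase p.1) := fun p =>
    ⟨fun hp => (mem_filter.1 hp).2, fun h => mem_filter.2
      ⟨mem_product.2 ⟨minimals_subset _ h.1, mem_of_mem_erase (minimals_subset _ h.2)⟩, h⟩⟩
  calc _ = ∑ p ∈ P with p.2 ∈ D, numLinExt ((s.erase p.1).erase p.2) := by
        refine (sum_finset_product' _ _ _ fun p => ?_).symm
        simp only [mem_filter, hP, and_assoc]
    _ ≤ ∑ p ∈ P with p.1 ∈ D, numLinExt ((s.erase p.1).erase p.2) := by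
        refine sum_filter_snd_le_sum_filter_fst (fun p => by rw [Prod.fst_swap, Prod.snd_swap,
          erase_right_comm]) fun p hp hp₁ hp₂ => ?_
        rw [hP] at hp ⊢
        exact swap_mem_minimals hp.1 hp.2 hp₁ hp₂
    _ = ∑ m ∈ minimals s with m ∈ D, ∑ v ∈ minimals (s.erase m),
          numLinExt ((s.erase m).erase v) := by
        refine sum_finset_product' (f := fun m v => numLinExt ((s.erase m).erase v)) _ _ _
          fun p => ?_
        simp only [mem_filter, hP]
        tauto
    _ ≤ _ := sum_le_sum fun m _ => sum_minimals_le_numLinExt _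

theorem sum_filter_mem_add_sum_filter_lowerClosure_le {A : Finset α}
    (hA : IsAntichain (· ≤ ·) (A : Set α)) (t : Finset α) (f : α → ℕ) :
    ∑ m ∈ t with m ∈ A, f m + ∑ m ∈ t with m ∈ lowerClosure ↑{a ∈ A | a ∉ t}, f m ≤
      ∑ m ∈ t with m ∈ lowerClosure (A : Set α), f m := by
  have hdisj : Disjoint {m ∈ t | m ∈ A} {m ∈ t | m ∈ lowerClosure ↑{a ∈ A | a ∉ t}} := by
    refine disjoint_filter.2 fun m hm hmA hmA₁ => ?_
    obtain ⟨a, ha, hma⟩ := mem_lowerClosure.1 hmA₁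
    obtain ⟨haA, hat⟩ := mem_filter.1 ha
    exact hat (hA.eq hmA haA hma ▸ hm)
  rw [← sum_union hdisj, ← filter_or]
  refine sum_le_sum_of_subset (monotone_filter_right _ ?_)
  rintro m - (hm | hm)
  · exact subset_lowerClosure (mem_coe.2 hm)
  · exact lowerClosure_mono (coe_subset.2 (filter_subset _ _)) hm

theorem sum_numLinExt_erase_le_of_isAntichain {A s : Finset α}
    (hA : IsAntichain (· ≤ ·) (A : Set α)) (hAs : A ⊆ s) :
    ∑ a ∈ A, numLinExt (s.erase a) ≤
      ∑ m ∈ minimals s with m ∈ lowerClosure (A : Set α), numLinExt (s.erase m) := by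
  induction s using Finset.strongInduction generalizing A with
  | H s ih =>
    set A₁ := {a ∈ A | a ∉ minimals s}
    have hA₁s : ∀ a ∈ A₁, a ∈ s ∧ a ∉ minimals s := fun a ha =>
      ⟨hAs (mem_filter.1 ha).1, (mem_filter.1 ha).2⟩
    have hA₁ : ∑ a ∈ A₁, numLinExt (s.erase a) ≤
        ∑ m ∈ minimals s with m ∈ lowerClosure (A₁ : Set α), numLinExt (s.erase m) :=
      calc ∑ a ∈ A₁, numLinExt (s.erase a)
          = ∑ m ∈ minimals s, ∑ a ∈ A₁, numLinExt ((s.erase m).erase a) := by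
            rw [sum_comm]
            exact sum_congr rfl fun a ha => numLinExt_erase_eq_sum (hA₁s a ha).1 (hA₁s a ha).2
        _ ≤ ∑ m ∈ minimals s, ∑ v ∈ minimals (s.erase m) with v ∈ lowerClosure (A₁ : Set α),
              numLinExt ((s.erase m).erase v) := by
            refine sum_le_sum fun m hm => ih (s.erase m) (erase_ssubset (minimals_subset s hm))
              (hA.subset (filter_subset _ _)) fun a ha => mem_erase.2 ⟨?_, (hA₁s a ha).1⟩
            rintro rfl
            exact (hA₁s a ha).2 hm
        _ ≤ _ := sum_sum_minimals_le (lowerClosure (A₁ : Set α)) s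
    calc ∑ a ∈ A, numLinExt (s.erase a)
        = ∑ a ∈ A with a ∈ minimals s, numLinExt (s.erase a) + ∑ a ∈ A₁, numLinExt (s.erase a) :=
          (sum_filter_add_sum_filter_not _ _ _).symm
      _ ≤ ∑ m ∈ minimals s with m ∈ A, numLinExt (s.erase m) +
            ∑ m ∈ minimals s with m ∈ lowerClosure (A₁ : Set α), numLinExt (s.erase m) := by
          rw [filter_mem_eq_inter, filter_mem_eq_inter, inter_comm]
          gcongr
      _ ≤ _ := sum_filter_mem_add_sum_filter_lowerClosure_le hA _ _

theorem sum_numLinExt_erase_le_numLinExt {A s : Finset α}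
    (hA : IsAntichain (· ≤ ·) (A : Set α)) (hAs : A ⊆ s) :
    ∑ a ∈ A, numLinExt (s.erase a) ≤ numLinExt s :=
  (sum_numLinExt_erase_le_of_isAntichain hA hAs).trans <|
    (sum_le_sum_of_subset (filter_subset _ _)).trans (sum_minimals_le_numLinExt s)

theorem numLinExt_erase_lt {s : Finset α} {x y : α} (hx : x ∈ s) (hy : y ∈ s) (hxy : ¬ x ≤ y)
    (hyx : ¬ y ≤ x) : numLinExt (s.erase x) < numLinExt s := by
  have hA : IsAntichain (· ≤ ·) (({x, y} : Finset α) : Set α) := by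
    rw [coe_pair]
    exact Set.pairwise_pair.2 fun _ => ⟨hxy, hyx⟩
  calc numLinExt (s.erase x) < numLinExt (s.erase x) + numLinExt (s.erase y) :=
        Nat.lt_add_of_pos_right (numLinExt_pos _)
    _ = ∑ a ∈ {x, y}, numLinExt (s.erase a) :=
        (sum_pair (f := fun a => numLinExt (s.erase a)) fun h => hxy h.le).symm
    _ ≤ numLinExt s :=
        sum_numLinExt_erase_le_numLinExt hA (insert_subset hx (singleton_subset_iff.2 hy))

end LinearExtensions

section Legal

variable {α : Type*} [PartialOrder α]

def LegalBefore (δ : α → Bool) (p q : α) : Prop :=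
  (p < q → δ q = false) ∧ (q < p → δ p = true)

theorem isAntichain_heads_legalBefore (δ : α → Bool) (s : Finset α) :
    IsAntichain (· ≤ ·) (heads (LegalBefore δ) s : Set α) := by
  intro a ha b hb hab hle
  have hlt := lt_of_le_of_ne hle hab
  have hb₁ := ((mem_filter.1 ha).2 b (mem_filter.1 hb).1 hab.symm).1 hlt
  have hb₂ := ((mem_filter.1 hb).2 a (mem_filter.1 ha).1 hab).2 hlt
  simp [hb₁] at hb₂

theorem sum_heads_legalBefore_le (δ : α → Bool) (s : Finset α) :
    ∑ a ∈ heads (LegalBefore δ) s, numLinExt (s.erase a) ≤ numLinExt s :=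
  sum_numLinExt_erase_le_numLinExt (isAntichain_heads_legalBefore δ s) (filter_subset _ _)

theorem card_orderings_legalBefore_le (δ : α → Bool) (s : Finset α) :
    #(orderings (LegalBefore δ) s) ≤ numLinExt s := by
  induction s using Finset.strongInduction with
  | H s ih =>
    rcases s.eq_empty_or_nonempty with rfl | hs
    · simp [numLinExt, orderings_empty]
    · rw [card_orderings hs]
      exact (sum_le_sum fun a ha => ih _ (erase_ssubset (filter_subset _ _ ha))).trans
        (sum_heads_legalBefore_le δ s)

theorem card_orderings_legalBefore_lt {δ : α → Bool} {s : Finset α} {x y z : α} (hx : x ∈ s)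
    (hy : y ∈ s) (hz : z ∈ s) (hzx : z < x) (hzy : z < y) (hxy : ¬ x ≤ y) (hyx : ¬ y ≤ x)
    (hδx : δ x = true) (hδy : δ y = false) :
    #(orderings (LegalBefore δ) s) < numLinExt s := by
  induction s using Finset.strongInduction with
  | H s ih =>
    have hs : s.Nonempty := ⟨x, hx⟩
    by_cases hheads : heads (LegalBefore δ) s ⊆ {x}
    · calc #(orderings (LegalBefore δ) s)
          ≤ ∑ a ∈ {x}, #(orderings (LegalBefore δ) (s.erase a)) := by
            rw [card_orderings hs]
            exact sum_le_sum_of_subset hheads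
        _ ≤ numLinExt (s.erase x) := by
            rw [sum_singleton]
            exact card_orderings_legalBefore_le δ _
        _ < numLinExt s := numLinExt_erase_lt hx hy hxy hyx
    · obtain ⟨a, ha, hax⟩ := not_subset.1 hheads
      have hay : a ≠ y := by
        rintro rfl
        simp [((mem_filter.1 ha).2 z hz hzy.ne).2 hzy] at hδy
      have haz : a ≠ z := by
        rintro rfl
        simp [((mem_filter.1 ha).2 x hx hzx.ne').1 hzx] at hδx
      have hsa : s.erase a ⊂ s := erase_ssubset (filter_subset _ _ ha)
      rw [card_orderings hs]
      refine (sum_lt_sum (fun _ _ => card_orderings_legalBefore_le δ _) ⟨a, ha, ?_⟩).trans_le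
        (sum_heads_legalBefore_le δ s)
      exact ih _ hsa (mem_erase.2 ⟨fun h => hax (mem_singleton.2 h.symm), hx⟩)
        (mem_erase.2 ⟨hay.symm, hy⟩) (mem_erase.2 ⟨haz.symm, hz⟩)

theorem deltaLegal_iff {n : ℕ} {δ : α → Bool} {σ : Fin n ≃ α} :
    DeltaLegal δ σ ↔ ∀ i j, i < j → LegalBefore δ (σ i) (σ j) := by
  constructor
  · intro h i j hij
    refine ⟨fun hlt => ?_, fun hlt => ?_⟩
    · by_contra hδ
      exact lt_asymm hij (by simpa using (h (σ j) (σ i) hlt).1 (by simpa using hδ))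
    · by_contra hδ
      exact lt_asymm hij (by simpa using (h (σ i) (σ j) hlt).2 (by simpa using hδ))
  · intro h x y hyx
    obtain ⟨i, rfl⟩ := σ.surjective x
    obtain ⟨j, rfl⟩ := σ.surjective y
    simp only [Equiv.symm_apply_apply]
    refine ⟨fun hδ => ?_, fun hδ => ?_⟩
    · rcases lt_trichotomy i j with hij | rfl | hji
      · exact hij
      · exact absurd hyx (lt_irrefl _)
      · simp [(h j i hji).1 hyx] at hδ
    · rcases lt_trichotomy j i with hji | rfl | hij
      · exact hji
      · exact absurd hyx (lt_irrefl _)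
      · simp [(h i j hij).2 hyx] at hδ

theorem card_deltaLegal [Fintype α] {n : ℕ} (hn : Fintype.card α = n) (δ : α → Bool) :
    #{σ : Fin n ≃ α | DeltaLegal δ σ} = #(orderings (LegalBefore δ) univ) := by
  rw [← card_equivFin_pairwise hn]
  congr 1
  ext σ
  simp only [mem_filter, mem_univ, true_and, deltaLegal_iff]

theorem card_linearExtensions [Fintype α] {n : ℕ} (hn : Fintype.card α = n) :
    #{σ : Fin n ≃ α | ∀ i j, σ i < σ j → i < j} = numLinExt (univ : Finset α) := by
  rw [numLinExt, ← card_equivFin_pairwise hn]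
  congr 1
  ext σ
  simp only [mem_filter, mem_univ, true_and]
  refine ⟨fun h i j hij hji => (h j i hji).not_gt hij,
    fun h i j hij => lt_of_not_ge fun hji => ?_⟩
  exact hji.lt_or_eq.elim (fun hlt => h j i hlt hij) fun heq => hij.ne (congrArg σ heq.symm)

end Legal

end LegalOrdering

theorem card_delta_legal_lt_card_linear_extensions {n : ℕ} {P : Type*}
    [PartialOrder P] [Fintype P] (hcard : Fintype.card P = n) (δ : P → Bool)
    (h : ∃ x y z : P, z < x ∧ z < y ∧ ¬ x ≤ y ∧ ¬ y ≤ x ∧ δ x ≠ δ y) :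
    (Finset.univ.filter fun σ : Fin n ≃ P => DeltaLegal δ σ).card <
      (Finset.univ.filter fun σ : Fin n ≃ P => ∀ i j : Fin n, σ i < σ j → i < j).card := by
  rw [LegalOrdering.card_deltaLegal hcard, LegalOrdering.card_linearExtensions hcard]
  obtain ⟨x, y, z, hzx, hzy, hxy, hyx, hδ⟩ := h
  cases hx : δ x <;> cases hy : δ y
  · simp_all
  · exact LegalOrdering.card_orderings_legalBefore_lt (mem_univ y) (mem_univ x) (mem_univ z)
      hzy hzx hyx hxy hy hx
  · exact LegalOrdering.card_orderings_legalBefore_lt (mem_univ x) (mem_univ y) (mem_univ z)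
      hzx hzy hxy hyx hx hy
  · simp_all
end

section
/- The number of permutations of the Boolean lattice B_n avoiding the pattern {1}{1,2}{2} is at least (2^(n-1)/(n+1)) · ∏_{k=0}^{n} (C(n,k) + 1)!. -/
open scoped Classical

namespace VeeLower

/-- `f n k` : number of split choices at level `k` (only levels `≥ 2` get a real split). -/
def f (n k : ℕ) : ℕ := if 2 ≤ k then n.choose k + 1 else 1

/-- the level-`k` sets -/
abbrev Lev (n : ℕ) (k : Fin (n+1)) := {A : Finset (Fin n) // A.card = (k : ℕ)}

/-- parameter space: orderings of each level, split points, position of `∅`. -/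
abbrev Om (n : ℕ) :=
  (∀ k : Fin (n+1), Fin (n.choose k) ≃ Lev n k) ×
    (∀ k : Fin (n+1), Fin (f n k)) × Fin (2 ^ n)

variable {n : ℕ}

lemma card_lt (A : Finset (Fin n)) : A.card < n + 1 :=
  Nat.lt_succ_of_le (by simpa using A.card_le_univ)

/-- within-level index of `A` -/
def jA (ω : Om n) (A : Finset (Fin n)) : ℕ :=
  ((ω.1 ⟨A.card, card_lt A⟩).symm ⟨A, rfl⟩ : Fin _)

/-- split point at level `k` (as a natural number, `0` outside range). -/
def aN (ω : Om n) (k : ℕ) : ℕ :=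
  if h : k < n + 1 then (ω.2.1 ⟨k, h⟩ : ℕ) else 0

/-- sum of split points of levels above `k` -/
def SA (ω : Om n) (k : ℕ) : ℕ := ∑ m ∈ Finset.Ioc k n, aN ω m

/-- number of sets of level in `[1, k)` -/
def CB (n k : ℕ) : ℕ := ∑ m ∈ Finset.Ico 1 k, n.choose m

/-- position of `A` among nonempty sets -/
def u (ω : Om n) (A : Finset (Fin n)) : ℕ :=
  if jA ω A < aN ω A.card then SA ω A.card + jA ω A
  else CB n A.card + SA ω A.card + jA ω A

lemma aN_le (ω : Om n) (k : ℕ) : aN ω k ≤ n.choose k := by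
  unfold aN
  split
  · have h2 := (ω.2.1 ⟨k, ‹_›⟩).isLt
    simp only [f, Fin.val_mk] at h2
    split at h2 <;> omega
  · exact Nat.zero_le _

lemma aN_one (ω : Om n) : aN ω 1 = 0 := by
  unfold aN
  split
  · have h2 := (ω.2.1 ⟨1, ‹_›⟩).isLt
    simp only [f, Fin.val_mk] at h2
    split at h2 <;> omega
  · rfl

lemma aN_small (ω : Om n) {k : ℕ} (hk : k < 2) : aN ω k = 0 := by
  unfold aN
  split
  · have h2 := (ω.2.1 ⟨k, ‹_›⟩).isLt
    simp only [f, Fin.val_mk] at h2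
    split at h2 <;> omega
  · rfl

lemma jA_lt (ω : Om n) (A : Finset (Fin n)) : jA ω A < n.choose A.card :=
  ((ω.1 ⟨A.card, card_lt A⟩).symm ⟨A, rfl⟩).isLt

/-- `SA` strong antitonicity -/
lemma SA_add_le (ω : Om n) {k k' : ℕ} (h1 : k' < k) (h2 : k ≤ n) :
    SA ω k + aN ω k ≤ SA ω k' := by
  unfold SA
  have hk : k ∈ Finset.Ioc k' n := Finset.mem_Ioc.2 ⟨h1, h2⟩
  rw [← Finset.sum_erase_add _ _ hk]
  have : Finset.Ioc k n ⊆ (Finset.Ioc k' n).erase k := by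
    intro x hx
    rw [Finset.mem_erase, Finset.mem_Ioc] at *
    omega
  exact Nat.add_le_add_right (Finset.sum_le_sum_of_subset this) _

lemma SA_le_u (ω : Om n) (A : Finset (Fin n)) : SA ω A.card ≤ u ω A := by
  unfold u; split <;> omega

/-- master lemma 1 : a "left" set precedes all smaller-level sets. -/
lemma M1 (ω : Om n) {A B : Finset (Fin n)} (h : A.card < B.card)
    (hleft : jA ω B < aN ω B.card) : u ω B < u ω A := by
  have h1 : u ω B < SA ω B.card + aN ω B.card := by
    unfold u; rw [if_pos hleft]; omega
  have h2 : SA ω B.card + aN ω B.card ≤ SA ω A.card :=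
    SA_add_le ω h (by have := card_lt B; omega)
  have h3 := SA_le_u ω A
  omega

/-- `G m = CB (m+1) + SA m`, the first position of level-`(m+1)`-or-larger "right" sets. -/
def G (ω : Om n) (m : ℕ) : ℕ := CB n (m + 1) + SA ω m

lemma G_mono (ω : Om n) : Monotone (G ω) := by
  apply monotone_nat_of_le_succ
  intro m
  unfold G CB SA
  have hIco : Finset.Ico 1 (m + 1 + 1) = insert (m+1) (Finset.Ico 1 (m+1)) := by
    ext x; simp [Finset.mem_Ico, Finset.mem_insert]
  rw [hIco, Finset.sum_insert (by simp)]
  by_cases hm : m + 1 ≤ n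
  · have hIoc : Finset.Ioc m n = insert (m+1) (Finset.Ioc (m+1) n) := by
      ext x; simp [Finset.mem_Ioc, Finset.mem_insert]; omega
    rw [hIoc, Finset.sum_insert (by simp)]
    have := aN_le ω (m+1)
    omega
  · have hIoc : Finset.Ioc m n = Finset.Ioc (m+1) n := by
      ext x; simp [Finset.mem_Ioc]; omega
    rw [hIoc]; omega

lemma u_lt_G (ω : Om n) (A : Finset (Fin n)) (hA : A.Nonempty) :
    u ω A < G ω A.card := by
  have hj := jA_lt ω A
  have hc : 1 ≤ A.card := Finset.card_pos.2 hA
  have hCB : CB n (A.card + 1) = CB n A.card + n.choose A.card := by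
    unfold CB
    have : Finset.Ico 1 (A.card + 1) = insert A.card (Finset.Ico 1 A.card) := by
      ext x; simp [Finset.mem_Ico, Finset.mem_insert]; omega
    rw [this, Finset.sum_insert (by simp)]
    omega
  unfold u G
  have := aN_le ω A.card
  split <;> omega

/-- a "right" set of level `m+1` sits at position at least `G m`. -/
lemma right_ge (ω : Om n) {B : Finset (Fin n)} {m : ℕ} (hm : B.card = m + 1)
    (hright : ¬ jA ω B < aN ω B.card) : G ω m ≤ u ω B := by
  rw [hm] at hright
  unfold G u
  rw [hm, if_neg hright]
  have hmn : m + 1 ≤ n := by have := card_lt B; omega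
  have hIoc : Finset.Ioc m n = insert (m+1) (Finset.Ioc (m+1) n) := by
    ext x; simp [Finset.mem_Ioc, Finset.mem_insert]; omega
  unfold SA
  rw [hIoc, Finset.sum_insert (by simp)]
  omega

/-- master lemma 2 : a "right" set comes after all smaller-level nonempty sets. -/
lemma M2 (ω : Om n) {C B : Finset (Fin n)} (h : C.card < B.card)
    (hC : C.Nonempty) (hright : ¬ jA ω B < aN ω B.card) : u ω C < u ω B := by
  obtain ⟨m, hm⟩ : ∃ m, B.card = m + 1 := ⟨B.card - 1, by omega⟩
  have h1 : u ω C < G ω C.card := u_lt_G ω C hC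
  have h2 : G ω C.card ≤ G ω m := G_mono ω (by omega)
  have h3 : G ω m ≤ u ω B := right_ge ω hm hright
  omega

lemma CB_pos (hn2 : 2 ≤ n) {k : ℕ} (hk : 2 ≤ k) : 1 ≤ CB n k := by
  unfold CB
  calc 1 ≤ n.choose 1 := by simp; omega
  _ ≤ ∑ m ∈ Finset.Ico 1 k, n.choose m :=
      Finset.single_le_sum (fun i _ => Nat.zero_le _) (by simp [Finset.mem_Ico]; omega)

lemma jA_spec (ω : Om n) (k : Fin (n+1)) (x : Lev n k) :
    jA ω x.val = ((ω.1 k).symm x : ℕ) := by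
  obtain ⟨kv, hk⟩ := k
  obtain ⟨A, hA⟩ := x
  simp only at hA
  subst hA
  rfl

/-- same-level injectivity of `u` in terms of `jA`. -/
lemma M3 (ω : Om n) {A B : Finset (Fin n)} (hcard : A.card = B.card)
    (hne : A.Nonempty) (hu : u ω A = u ω B) : jA ω A = jA ω B := by
  have hc1 : 1 ≤ A.card := Finset.card_pos.2 hne
  by_cases hk1 : A.card = 1
  · have h0 : aN ω A.card = 0 := by rw [hk1]; exact aN_one ω
    have h0' : aN ω B.card = 0 := by rw [← hcard, h0]
    unfold u at hu
    rw [if_neg (by omega), if_neg (by omega), ← hcard] at hu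
    omega
  · have hn2 : 2 ≤ n := by have := card_lt A; have := A.card_le_univ; simp at this; omega
    have hCB : 1 ≤ CB n A.card := CB_pos hn2 (by omega)
    unfold u at hu
    rw [← hcard] at hu
    by_cases hA : jA ω A < aN ω A.card <;> by_cases hB : jA ω B < aN ω A.card <;>
      simp only [if_pos, if_neg, hA, hB, if_true, if_false] at hu <;> omega

/-- injectivity of `u` on nonempty sets. -/
lemma u_inj (ω : Om n) {A B : Finset (Fin n)} (hA : A.Nonempty) (hB : B.Nonempty)
    (hu : u ω A = u ω B) : A = B := by
  rcases Nat.lt_trichotomy A.card B.card with h | h | h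
  · by_cases hL : jA ω B < aN ω B.card
    · exact absurd hu (by have := M1 ω h hL; omega)
    · exact absurd hu (by have := M2 ω h hA hL; omega)
  · -- same level: jA equal hence A = B
    have hj := M3 ω h hA hu
    have hx := jA_spec ω ⟨A.card, card_lt A⟩ ⟨A, rfl⟩
    have hy := jA_spec ω ⟨A.card, card_lt A⟩ ⟨B, h.symm⟩
    simp only at hx hy
    have hfe : (ω.1 ⟨A.card, card_lt A⟩).symm ⟨A, rfl⟩ =
        (ω.1 ⟨A.card, card_lt A⟩).symm ⟨B, h.symm⟩ := Fin.ext (by omega)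
    have := (ω.1 ⟨A.card, card_lt A⟩).symm.injective hfe
    simpa using congrArg Subtype.val this
  · by_cases hL : jA ω A < aN ω A.card
    · exact absurd hu (by have := M1 ω h hL; omega)
    · exact absurd hu (by have := M2 ω h hB hL; omega)

lemma CB_total : CB n (n + 1) + 1 = 2 ^ n := by
  have h : Finset.range (n + 1) = insert 0 (Finset.Ico 1 (n + 1)) := by
    ext x; simp [Finset.mem_Ico, Finset.mem_insert]; omega
  have := Nat.sum_range_choose n
  rw [h, Finset.sum_insert (by simp)] at this
  unfold CB
  simp at this ⊢
  omega

lemma u_lt (ω : Om n) (A : Finset (Fin n)) (hA : A.Nonempty) : u ω A + 1 < 2 ^ n := by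
  have h1 := u_lt_G ω A hA
  have h2 : G ω A.card ≤ G ω n := G_mono ω (by have := card_lt A; omega)
  have h3 : G ω n = CB n (n + 1) := by
    unfold G SA
    simp
  have := CB_total (n := n)
  omega

/-- final position of each set: `∅` goes at slot `t`, others keep `u`-order. -/
def posN (ω : Om n) (A : Finset (Fin n)) : ℕ :=
  if A = ∅ then (ω.2.2 : ℕ)
  else u ω A + if (ω.2.2 : ℕ) ≤ u ω A then 1 else 0

lemma posN_lt (ω : Om n) (A : Finset (Fin n)) : posN ω A < 2 ^ n := by
  unfold posN
  split
  · exact ω.2.2.isLt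
  · have := u_lt ω A (Finset.nonempty_iff_ne_empty.2 ‹_›)
    split <;> omega

/-- `posN` is strictly monotone in `u` on nonempty sets -/
lemma posN_mono (ω : Om n) {A B : Finset (Fin n)} (hA : A ≠ ∅) (hB : B ≠ ∅)
    (h : u ω A ≤ u ω B) : posN ω A ≤ posN ω B := by
  unfold posN
  rw [if_neg hA, if_neg hB]
  by_cases h1 : (ω.2.2 : ℕ) ≤ u ω A
  · rw [if_pos h1, if_pos (le_trans h1 h)]; omega
  · split <;> omega

lemma posN_lt_u_lt (ω : Om n) {A B : Finset (Fin n)} (hA : A ≠ ∅) (hB : B ≠ ∅)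
    (h : posN ω A < posN ω B) : u ω A < u ω B := by
  rcases lt_or_ge (u ω A) (u ω B) with h' | h'
  · exact h'
  · have := posN_mono ω hB hA h'
    omega

lemma posN_smono (ω : Om n) {A B : Finset (Fin n)} (hA : A ≠ ∅) (hB : B ≠ ∅)
    (h : u ω A < u ω B) : posN ω A < posN ω B := by
  unfold posN
  rw [if_neg hA, if_neg hB]
  by_cases h1 : (ω.2.2 : ℕ) ≤ u ω A
  · rw [if_pos h1, if_pos (by omega)]; omega
  · split <;> omega

lemma posN_inj (ω : Om n) : Function.Injective (posN ω) := by
  intro A B h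
  by_cases hA : A = ∅ <;> by_cases hB : B = ∅
  · rw [hA, hB]
  · exfalso
    unfold posN at h
    rw [if_pos hA, if_neg hB] at h
    split at h <;> omega
  · exfalso
    unfold posN at h
    rw [if_neg hA, if_pos hB] at h
    split at h <;> omega
  · refine u_inj ω (Finset.nonempty_iff_ne_empty.2 hA) (Finset.nonempty_iff_ne_empty.2 hB) ?_
    rcases Nat.lt_trichotomy (u ω A) (u ω B) with h' | h' | h'
    · exact absurd h (by have := posN_smono ω hA hB h'; omega)
    · exact h'
    · exact absurd h (by have := posN_smono ω hB hA h'; omega)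

/-- the position map as a function into `Fin (2^n)` -/
def posF (ω : Om n) : Finset (Fin n) → Fin (2 ^ n) := fun A => ⟨posN ω A, posN_lt ω A⟩

lemma posF_bij (ω : Om n) : Function.Bijective (posF ω) := by
  rw [Fintype.bijective_iff_injective_and_card]
  constructor
  · intro A B h
    exact posN_inj ω (by simpa [posF, Fin.ext_iff] using h)
  · simp

/-- the permutation of `B_n` associated to the parameters -/
noncomputable def sigma (ω : Om n) : Fin (2 ^ n) ≃ Finset (Fin n) :=
  (Equiv.ofBijective (posF ω) (posF_bij ω)).symm

lemma sigma_symm (ω : Om n) (A : Finset (Fin n)) : (sigma ω).symm A = posF ω A := rfl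

lemma sigma_avoids (ω : Om n) : ¬ ContainsVee (sigma ω) := by
  rintro ⟨p, q, r, hpq, hqr, hAB, hCB, hAC, hCA⟩
  set A := sigma ω p with hA
  set B := sigma ω q with hB
  set C := sigma ω r with hC
  have hp : p = posF ω A := by rw [hA, ← sigma_symm, Equiv.symm_apply_apply]
  have hq : q = posF ω B := by rw [hB, ← sigma_symm, Equiv.symm_apply_apply]
  have hr : r = posF ω C := by rw [hC, ← sigma_symm, Equiv.symm_apply_apply]
  rw [hp, hq] at hpq
  rw [hq, hr] at hqr
  have hAne : A ≠ ∅ := by intro h; rw [h] at hAC; exact hAC (Finset.empty_subset _)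
  have hCne : C ≠ ∅ := by intro h; rw [h] at hCA; exact hCA (Finset.empty_subset _)
  have hBne : B ≠ ∅ := by intro h; rw [h] at hAB; exact Finset.not_ssubset_empty _ hAB
  have h1 : u ω A < u ω B := posN_lt_u_lt ω hAne hBne hpq
  have h2 : u ω B < u ω C := posN_lt_u_lt ω hBne hCne hqr
  have hcAB : A.card < B.card := Finset.card_lt_card hAB
  have hcCB : C.card < B.card := Finset.card_lt_card hCB
  by_cases hL : jA ω B < aN ω B.card
  · have := M1 ω hcAB hL; omega
  · have := M2 ω hcCB (Finset.nonempty_iff_ne_empty.2 hCne) hL; omega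

/-- a level-`≥2` set is "left" iff it comes before the singletons. -/
lemma left_iff (ω : Om n) {A x0 : Finset (Fin n)} (hx0 : x0.card = 1) (hk : 2 ≤ A.card) :
    u ω A < u ω x0 ↔ jA ω A < aN ω A.card := by
  constructor
  · intro h
    by_contra hR
    obtain ⟨m, hm⟩ : ∃ m, A.card = m + 1 := ⟨A.card - 1, by omega⟩
    have h1 : u ω x0 < G ω 1 := by
      have := u_lt_G ω x0 (Finset.card_pos.1 (by omega))
      rwa [hx0] at this
    have h2 : G ω 1 ≤ G ω m := G_mono ω (by omega)
    have h3 := right_ge ω hm hR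
    omega
  · intro hL
    have h1 : u ω A < SA ω A.card + aN ω A.card := by
      unfold u; rw [if_pos hL]; omega
    have h2 : SA ω A.card + aN ω A.card ≤ SA ω 1 :=
      SA_add_le ω (by omega) (by have := card_lt A; omega)
    have h3 : SA ω 1 ≤ u ω x0 := by
      have := SA_le_u ω x0; rwa [hx0] at this
    omega

lemma card_filter_fin_lt (N m : ℕ) (h : m ≤ N) :
    ((Finset.univ : Finset (Fin N)).filter fun i => i.val < m).card = m := by
  have himg : ((Finset.univ : Finset (Fin N)).filter fun i => i.val < m) =
      Finset.image (Fin.castLE h) Finset.univ := by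
    ext i
    simp only [Finset.mem_filter, Finset.mem_image, Finset.mem_univ, true_and]
    constructor
    · intro hi; exact ⟨⟨i, hi⟩, rfl⟩
    · rintro ⟨j, rfl⟩; exact j.isLt
  rw [himg, Finset.card_image_of_injective _ (Fin.castLE_injective h)]
  simp

/-- the split point at level `k ≥ 2` is recoverable from `u`. -/
lemma aN_count (ω : Om n) (k : Fin (n+1)) (hk : 2 ≤ (k : ℕ)) {x0 : Finset (Fin n)}
    (hx0 : x0.card = 1) :
    aN ω k = ((Finset.univ.filter fun A : Finset (Fin n) =>
      A.card = (k : ℕ) ∧ u ω A < u ω x0).card) := by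
  have himg : (Finset.univ.filter fun A : Finset (Fin n) =>
      A.card = (k : ℕ) ∧ u ω A < u ω x0) =
      Finset.image (fun i : Fin (n.choose k) => ((ω.1 k) i).val)
        (Finset.univ.filter fun i => i.val < aN ω k) := by
    ext A
    simp only [Finset.mem_filter, Finset.mem_image, Finset.mem_univ, true_and]
    constructor
    · rintro ⟨hcard, hult⟩
      have hj : jA ω A < aN ω A.card := (left_iff ω hx0 (by omega)).1 hult
      refine ⟨(ω.1 k).symm ⟨A, hcard⟩, ?_, by simp⟩
      have hspec := jA_spec ω k ⟨A, hcard⟩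
      simp only at hspec
      rw [← hspec, ← hcard]
      exact hj
    · rintro ⟨i, hi, rfl⟩
      have hcard : ((ω.1 k) i).val.card = (k : ℕ) := ((ω.1 k) i).2
      refine ⟨hcard, ?_⟩
      apply (left_iff ω hx0 (by omega)).2
      have hspec := jA_spec ω k ((ω.1 k) i)
      rw [hcard, hspec, Equiv.symm_apply_apply]
      exact hi
  rw [himg, Finset.card_image_of_injective _
    (fun a b hab => (ω.1 k).injective (Subtype.ext hab)),
    card_filter_fin_lt _ _ (aN_le ω k)]

lemma sigma_inj : Function.Injective (sigma (n := n)) := by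
  intro ω ω' h
  have hpos : ∀ A, posN ω A = posN ω' A := by
    intro A
    have h2 : (sigma ω).symm A = (sigma ω').symm A := by rw [h]
    rw [sigma_symm, sigma_symm] at h2
    simpa [posF, Fin.ext_iff] using h2
  have ht : (ω.2.2 : ℕ) = (ω'.2.2 : ℕ) := by
    have := hpos ∅
    simpa [posN] using this
  have hu : ∀ A : Finset (Fin n), A ≠ ∅ → u ω A = u ω' A := by
    intro A hA
    have hp := hpos A
    unfold posN at hp
    rw [if_neg hA, if_neg hA, ← ht] at hp
    split at hp <;> split at hp <;> omega
  have haN : ∀ m, aN ω m = aN ω' m := by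
    intro m
    by_cases hm : m < n + 1
    · by_cases h2 : 2 ≤ m
      · have hn2 : 2 ≤ n := by omega
        set x0 : Finset (Fin n) := {(⟨0, by omega⟩ : Fin n)} with hx0def
        have hx0 : x0.card = 1 := Finset.card_singleton _
        have hx0ne : x0 ≠ ∅ := by
          rw [← Finset.nonempty_iff_ne_empty, ← Finset.card_pos, hx0]; omega
        have e1 := aN_count ω ⟨m, hm⟩ (by simpa using h2) hx0
        have e2 := aN_count ω' ⟨m, hm⟩ (by simpa using h2) hx0
        simp only [Fin.val_mk] at e1 e2
        rw [e1, e2]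
        congr 1
        apply Finset.filter_congr
        intro A _
        constructor
        · rintro ⟨hc, hlt⟩
          have hAne : A ≠ ∅ := by
            rw [← Finset.nonempty_iff_ne_empty, ← Finset.card_pos, hc]; omega
          exact ⟨hc, by rw [← hu A hAne, ← hu x0 hx0ne]; exact hlt⟩
        · rintro ⟨hc, hlt⟩
          have hAne : A ≠ ∅ := by
            rw [← Finset.nonempty_iff_ne_empty, ← Finset.card_pos, hc]; omega
          exact ⟨hc, by rw [hu A hAne, hu x0 hx0ne]; exact hlt⟩
      · rw [aN_small ω (by omega), aN_small ω' (by omega)]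
    · unfold aN
      rw [dif_neg hm, dif_neg hm]
  have hSA : ∀ m, SA ω m = SA ω' m := fun m =>
    Finset.sum_congr rfl fun i _ => haN i
  have ha : ω.2.1 = ω'.2.1 := by
    funext k
    apply Fin.ext
    have h1 : aN ω ↑k = (ω.2.1 k : ℕ) := by
      unfold aN
      rw [dif_pos k.isLt]
    have h2 : aN ω' ↑k = (ω'.2.1 k : ℕ) := by
      unfold aN
      rw [dif_pos k.isLt]
    rw [← h1, ← h2]
    exact haN k
  have hψ : ω.1 = ω'.1 := by
    funext k
    have hsymm : (ω.1 k).symm = (ω'.1 k).symm := by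
      apply Equiv.ext
      intro x
      apply Fin.ext
      have hs1 := jA_spec ω k x
      have hs2 := jA_spec ω' k x
      rw [← hs1, ← hs2]
      -- show jA ω x.val = jA ω' x.val
      set A := x.val with hAdef
      have hA : A.card = (k : ℕ) := x.2
      by_cases hk0 : (k : ℕ) = 0
      · have j1 := jA_lt ω A
        have j2 := jA_lt ω' A
        rw [hA, hk0, Nat.choose_zero_right] at j1 j2
        omega
      · have hAne : A ≠ ∅ := by
          rw [← Finset.nonempty_iff_ne_empty, ← Finset.card_pos, hA]; omega
        have huA := hu A hAne
        unfold u at huA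
        rw [haN A.card, hSA A.card] at huA
        by_cases hL1 : jA ω A < aN ω' A.card <;> by_cases hL2 : jA ω' A < aN ω' A.card
        · rw [if_pos hL1, if_pos hL2] at huA; omega
        · rw [if_pos hL1, if_neg hL2] at huA
          -- mixed: need CB ≥ 1
          have hc2 : 2 ≤ A.card := by
            by_contra hc
            rw [aN_small ω' (by omega)] at hL1
            omega
          have := CB_pos (n := n) (by have := card_lt A; omega) hc2
          omega
        · rw [if_neg hL1, if_pos hL2] at huA
          have hc2 : 2 ≤ A.card := by
            by_contra hc
            rw [aN_small ω' (by omega)] at hL2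
            omega
          have := CB_pos (n := n) (by have := card_lt A; omega) hc2
          omega
        · rw [if_neg hL1, if_neg hL2] at huA; omega
    rw [← Equiv.symm_symm (ω.1 k), hsymm, Equiv.symm_symm]
  exact Prod.ext hψ (Prod.ext ha (Fin.ext ht))

lemma card_Lev (k : Fin (n+1)) : Fintype.card (Lev n k) = n.choose k := by
  rw [Fintype.card_finset_len]
  simp

lemma card_Om : Fintype.card (Om n) =
    (∏ k : Fin (n+1), (n.choose k).factorial) * ((∏ k : Fin (n+1), f n k) * 2 ^ n) := by
  rw [Fintype.card_prod, Fintype.card_prod, Fintype.card_pi, Fintype.card_pi, Fintype.card_fin]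
  congr 1
  · apply Finset.prod_congr rfl
    intro k _
    have e : Fin (n.choose k) ≃ Lev n k :=
      Fintype.equivOfCardEq (by rw [Fintype.card_fin, card_Lev])
    rw [Fintype.card_equiv e, Fintype.card_fin]
  · congr 1
    apply Finset.prod_congr rfl
    intro k _
    rw [Fintype.card_fin]

lemma card_le_avoiders :
    Fintype.card (Om n) ≤
      (Finset.univ.filter fun σ : Fin (2 ^ n) ≃ Finset (Fin n) => ¬ ContainsVee σ).card := by
  rw [← Fintype.card_subtype]
  exact Fintype.card_le_of_injective
    (fun ω => ⟨sigma ω, sigma_avoids ω⟩)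
    (fun a b hab => sigma_inj (by simpa using hab))

lemma prod_choose_succ :
    ∏ k ∈ Finset.range (n+1), (n.choose k + 1) =
      2 * (n+1) * ∏ k ∈ Finset.range (n+1), f n k := by
  have hpt : ∀ k ∈ Finset.range (n+1), n.choose k + 1 =
      f n k * (if k = 0 then 2 else if k = 1 then n+1 else 1) := by
    intro k _
    unfold f
    rcases k with _ | _ | k
    · norm_num
    · norm_num
    · norm_num [Nat.succ_le_succ]
  rw [Finset.prod_congr rfl hpt, Finset.prod_mul_distrib]
  have hg : ∏ k ∈ Finset.range (n+1), (if k = 0 then 2 else if k = 1 then n+1 else 1)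
      = 2 * (n+1) := by
    cases n with
    | zero => norm_num
    | succ m =>
      rw [Finset.prod_range_succ', Finset.prod_range_succ']
      have h1 : ∀ i ∈ Finset.range m,
          (if i+1+1 = 0 then 2 else if i+1+1 = 1 then m+1+1 else 1) = 1 := by
        intro i _; norm_num
      rw [Finset.prod_congr rfl h1]
      norm_num
      ring
  rw [hg]
  ring

lemma prod_fact_split :
    ∏ k ∈ Finset.range (n+1), (n.choose k + 1).factorial =
      (∏ k ∈ Finset.range (n+1), (n.choose k + 1)) *
        ∏ k ∈ Finset.range (n+1), (n.choose k).factorial := by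
  rw [← Finset.prod_mul_distrib]
  exact Finset.prod_congr rfl fun k _ => Nat.factorial_succ _

/-- the exact cardinality identity, in `ℕ`. -/
lemma NID : 2 * (n+1) * Fintype.card (Om n) =
    2 ^ n * ∏ k ∈ Finset.range (n+1), (n.choose k + 1).factorial := by
  rw [card_Om, prod_fact_split, prod_choose_succ,
    ← Fin.prod_univ_eq_prod_range (fun k => (n.choose k).factorial) (n+1),
    ← Fin.prod_univ_eq_prod_range (fun k => f n k) (n+1)]
  ring

end VeeLower

theorem lower_bound_avoiders {n : ℕ} :
    ((2 : ℚ) ^ ((n : ℤ) - 1) / (n + 1)) *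
        ∏ k ∈ Finset.range (n + 1), (Nat.factorial (Nat.choose n k + 1) : ℚ) ≤
      ((Finset.univ.filter fun σ : Fin (2 ^ n) ≃ Finset (Fin n) => ¬ ContainsVee σ).card : ℚ) := by
  have hcard := VeeLower.card_le_avoiders (n := n)
  have hnid := VeeLower.NID (n := n)
  have hc : (2 * ((n:ℚ)+1) * Fintype.card (VeeLower.Om n) : ℚ) =
      2 ^ n * ∏ k ∈ Finset.range (n+1), ((n.choose k + 1).factorial : ℚ) := by
    have hc0 := congrArg (fun x : ℕ => (x : ℚ)) hnid
    push_cast at hc0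
    convert hc0 using 2
  have h2 : (2:ℚ) ^ ((n:ℤ) - 1) = 2 ^ n / 2 := by
    rw [zpow_sub₀ (two_ne_zero), zpow_natCast, zpow_one]
  have h1 : ((2:ℚ) ^ ((n:ℤ) - 1) / (n + 1)) *
      ∏ k ∈ Finset.range (n + 1), ((n.choose k + 1).factorial : ℚ) =
      (Fintype.card (VeeLower.Om n) : ℚ) := by
    have hne : 2 * ((n:ℚ) + 1) ≠ 0 := by positivity
    have hcd : (Fintype.card (VeeLower.Om n) : ℚ) =
        2 ^ n * (∏ k ∈ Finset.range (n+1), ((n.choose k + 1).factorial : ℚ)) / (2 * ((n:ℚ)+1)) := by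
      rw [eq_div_iff hne]
      linear_combination hc
    rw [h2, hcd]
    have hne2 : ((n:ℚ) + 1) ≠ 0 := by positivity
    field_simp
  rw [h1]
  exact_mod_cast hcard
end

section
/- For any finite poset P and any permutation σ of P: if σ contains the pattern 132, then σ contains a 132 pattern whose first entry is a left-to-right minimal element of σ, i.e., there exist positions i < j < k with σ i < σ k < σ j such that no position h < i has σ h < σ i. -/
theorem contains132_of_LRME {n : ℕ} {P : Type*} [PartialOrder P] [Fintype P]
    (hcard : Fintype.card P = n) (σ : Fin n → P) (hσ : Function.Bijective σ)
    (h : ∃ i j k : Fin n, i < j ∧ j < k ∧ σ i < σ k ∧ σ k < σ j) :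
    ∃ i j k : Fin n, i < j ∧ j < k ∧ σ i < σ k ∧ σ k < σ j ∧
      ¬ ∃ h' : Fin n, h' < i ∧ σ h' < σ i := by
  obtain ⟨i, j, k, hij, hjk, h1, h2⟩ := h
  induction' hi : i.val using Nat.strong_induction_on with m IH generalizing i j k
  by_cases hm : ∃ h' : Fin n, h' < i ∧ σ h' < σ i
  · obtain ⟨h', hh1, hh2⟩ := hm
    exact IH h'.val (hi ▸ hh1) h' j k (hh1.trans hij) hjk (hh2.trans h1) h2 rfl
  · exact ⟨i, j, k, hij, hjk, h1, h2, hm⟩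
end
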